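/- arXiv:math/0701883 — 6 statements merged into one kernel-verified Lean document; each statement's English description precedes it below -/
import Mathlib

section
/- Let ω(x₁,x₂,x₃) = (|x₁|+|x₂|)|x₃| / (|x₁||x₂−x₃| + |x₂||x₁−x₃|). If x₁ < 0, x₂ > 0, and x₁ ≤ x₃ ≤ x₂ (with x₃ not making the denominator zero), then 0 ≤ ω(x₁,x₂,x₃) ≤ 1. -/
theorem omega_bounds (x₁ x₂ x₃ : ℝ) (h1 : x₁ < 0) (h2 : 0 < x₂)
    (h3 : x₁ ≤ x₃) (h4 : x₃ ≤ x₂)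
    (hden : |x₁| * |x₂ - x₃| + |x₂| * |x₁ - x₃| ≠ 0) :
    0 ≤ (|x₁| + |x₂|) * |x₃| / (|x₁| * |x₂ - x₃| + |x₂| * |x₁ - x₃|) ∧
    (|x₁| + |x₂|) * |x₃| / (|x₁| * |x₂ - x₃| + |x₂| * |x₁ - x₃|) ≤ 1 := by
  have hd0 : 0 < |x₁| * |x₂ - x₃| + |x₂| * |x₁ - x₃| :=
    lt_of_le_of_ne (by positivity) (Ne.symm hden)
  refine ⟨div_nonneg (by positivity) hd0.le, (div_le_one hd0).mpr ?_⟩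
  rw [abs_of_neg h1, abs_of_pos h2, abs_of_nonneg (by linarith : (0:ℝ) ≤ x₂ - x₃),
      abs_of_nonpos (by linarith : x₁ - x₃ ≤ 0)]
  rcases le_or_gt 0 x₃ with h | h
  · rw [abs_of_nonneg h]; nlinarith
  · rw [abs_of_neg h]; nlinarith
end

section
/- Let e₃ < 0 < e₁ and for τ ∈ [0,1] define ξ(τ) = (e₁+e₃)(1−τ)² and ψ(τ) = −e₁e₃(1−(1−τ)²)(1−τ)². Then for all τ ∈ [0,1], the interval [ξ(τ) − 2√ψ(τ), ξ(τ) + 2√ψ(τ)] is contained in [e₃, e₁]. -/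
theorem interval_inclusion (e₁ e₃ : ℝ) (h3 : e₃ < 0) (h1 : 0 < e₁)
    (ξ ψ : ℝ → ℝ)
    (hξ : ∀ τ, ξ τ = (e₁ + e₃) * (1 - τ)^2)
    (hψ : ∀ τ, ψ τ = -(e₁ * e₃) * (1 - (1 - τ)^2) * (1 - τ)^2) :
    ∀ τ ∈ Set.Icc (0:ℝ) 1,
      Set.Icc (ξ τ - 2 * Real.sqrt (ψ τ)) (ξ τ + 2 * Real.sqrt (ψ τ)) ⊆
        Set.Icc e₃ e₁ := by
  intro τ hτ x hx
  obtain ⟨hτ0, hτ1⟩ := hτ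
  obtain ⟨hx1, hx2⟩ := hx
  set s : ℝ := (1 - τ)^2 with hs
  have hs0 : 0 ≤ s := sq_nonneg _
  have hs1 : s ≤ 1 := by nlinarith
  have hψτ : ψ τ = (e₁ * (1 - s)) * ((-e₃) * s) := by rw [hψ]; ring
  have hsqrt : Real.sqrt (ψ τ) ≥ 0 := Real.sqrt_nonneg _
  -- upper bound: 2√ψ ≤ e₁ - ξ τ
  have c1 : (0:ℝ) ≤ e₁ * (1 - s) + (-e₃) * s := by nlinarith
  have h1' : Real.sqrt (ψ τ) ≤ (e₁ * (1 - s) + (-e₃) * s) / 2 := by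
    have := Real.sqrt_le_sqrt (show ψ τ ≤ ((e₁ * (1 - s) + (-e₃) * s) / 2)^2 by
      rw [hψτ]; nlinarith [sq_nonneg (e₁ * (1 - s) - (-e₃) * s)])
    rwa [Real.sqrt_sq (by linarith)] at this
  -- lower bound: 2√ψ ≤ ξ τ - e₃
  have c2 : (0:ℝ) ≤ e₁ * s + (-e₃) * (1 - s) := by nlinarith
  have h2' : Real.sqrt (ψ τ) ≤ (e₁ * s + (-e₃) * (1 - s)) / 2 := by
    have := Real.sqrt_le_sqrt (show ψ τ ≤ ((e₁ * s + (-e₃) * (1 - s)) / 2)^2 by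
      rw [hψτ]; nlinarith [sq_nonneg (e₁ * s - (-e₃) * (1 - s))])
    rwa [Real.sqrt_sq (by linarith)] at this
  rw [hξ] at hx1 hx2
  constructor <;> [nlinarith; nlinarith]
end

section
/- For z ∈ [0,1), the quadratic transformation (1−√z)^{−1/2} F(1/2, 1/2, 1; −2√z/(1−√z)) = √(2/(1+√(1−z))) · F(1/2, 1/2, 1; (1−√(1−z))/(1+√(1−z))) holds. -/
open MeasureTheory Set

/- ### Generic helpers -/

lemma intOn_inv_sqrt_left {a b : ℝ} :
    IntegrableOn (fun x : ℝ => 1 / Real.sqrt (x - a)) (Ioo a b) := by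
  have h1 : IntervalIntegrable (fun x : ℝ => x ^ (-(1/2) : ℝ)) volume 0 (b - a) :=
    intervalIntegral.intervalIntegrable_rpow' (by norm_num)
  have h2 := h1.comp_sub_right a
  simp only [zero_add, sub_add_cancel] at h2
  rcases le_or_gt b a with h | h
  · rw [Ioo_eq_empty (by exact fun hh => absurd hh (not_lt.mpr h))]; simp
  · have h3 := (intervalIntegrable_iff_integrableOn_Ioo_of_le h.le).mp h2
    apply h3.congr_fun ?_ measurableSet_Ioo
    intro x hx
    have hxa : (0:ℝ) ≤ x - a := by linarith [hx.1]
    simp only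
    rw [Real.rpow_neg hxa, ← Real.sqrt_eq_rpow]
    norm_num

lemma intOn_inv_sqrt_right {a b : ℝ} :
    IntegrableOn (fun x : ℝ => 1 / Real.sqrt (b - x)) (Ioo a b) := by
  have h1 : IntervalIntegrable (fun x : ℝ => x ^ (-(1/2) : ℝ)) volume 0 (b - a) :=
    intervalIntegral.intervalIntegrable_rpow' (by norm_num)
  have h2 := h1.comp_sub_left b
  simp only [sub_zero, sub_sub_cancel] at h2
  rcases le_or_gt b a with h | h
  · rw [Ioo_eq_empty (by exact fun hh => absurd hh (not_lt.mpr h))]; simp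
  · have h3 := (intervalIntegrable_iff_integrableOn_Ioo_of_le h.le).mp h2.symm
    apply h3.congr_fun ?_ measurableSet_Ioo
    intro x hx
    have hxa : (0:ℝ) ≤ b - x := by linarith [hx.2]
    simp only
    rw [Real.rpow_neg hxa, ← Real.sqrt_eq_rpow]
    norm_num

lemma intOn_of_bound {a b : ℝ} {f : ℝ → ℝ} (hf : ContinuousOn f (Ioo a b))
    (g : ℝ → ℝ) (hg : IntegrableOn g (Ioo a b))
    (hbound : ∀ x ∈ Ioo a b, ‖f x‖ ≤ g x) :
    IntegrableOn f (Ioo a b) :=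
  Integrable.mono' hg (hf.aestronglyMeasurable measurableSet_Ioo)
    ((ae_restrict_iff' measurableSet_Ioo).mpr (ae_of_all _ hbound))

lemma contOn_inv_sqrt {P : ℝ → ℝ} (hP : Continuous P) {A : Set ℝ}
    (hpos : ∀ x ∈ A, 0 < P x) : ContinuousOn (fun x => 1 / Real.sqrt (P x)) A :=
  ContinuousOn.div continuousOn_const (Real.continuous_sqrt.comp hP).continuousOn
    (fun x hx => (Real.sqrt_pos.mpr (hpos x hx)).ne')

lemma inv_sqrt_le {X Y : ℝ} (hY : 0 < Y) (h : Y ≤ X) :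
    1 / Real.sqrt X ≤ 1 / Real.sqrt Y :=
  one_div_le_one_div_of_le (Real.sqrt_pos.mpr hY) (Real.sqrt_le_sqrt h)

/-- `√(r²·Q) = r·√Q` packaged for `1/√`. -/
lemma scale_inv_sqrt {r P Q : ℝ} (hr : 0 ≤ r) (hP : P = r^2 * Q) :
    1 / Real.sqrt P = r⁻¹ * (1 / Real.sqrt Q) := by
  rw [hP, Real.sqrt_mul (sq_nonneg r), Real.sqrt_sq hr, one_div, one_div, mul_inv]

lemma image_Ioo_of_inv {a b a' b' : ℝ} {f finv : ℝ → ℝ}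
    (h1 : ∀ x ∈ Ioo a b, f x ∈ Ioo a' b')
    (h2 : ∀ y ∈ Ioo a' b', finv y ∈ Ioo a b)
    (h3 : ∀ y ∈ Ioo a' b', f (finv y) = y) :
    f '' Ioo a b = Ioo a' b' := by
  apply Subset.antisymm
  · rintro y ⟨x, hx, rfl⟩; exact h1 x hx
  · intro y hy; exact ⟨finv y, h2 y hy, h3 y hy⟩

lemma injOn_of_inv {a b : ℝ} {f finv : ℝ → ℝ}
    (h4 : ∀ x ∈ Ioo a b, finv (f x) = x) : InjOn f (Ioo a b) :=
  fun x hx y hy h => by rw [← h4 x hx, ← h4 y hy, h]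

/-- change of variables specialized to open intervals -/
lemma cov {a b a' b' : ℝ} {f f' : ℝ → ℝ} (hs : f '' Ioo a b = Ioo a' b')
    (hd : ∀ x ∈ Ioo a b, HasDerivWithinAt f (f' x) (Ioo a b) x)
    (hinj : InjOn f (Ioo a b)) (g : ℝ → ℝ) :
    ∫ x in Ioo a' b', g x = ∫ x in Ioo a b, |f' x| * g (f x) := by
  rw [← hs, MeasureTheory.integral_image_eq_integral_abs_deriv_smul measurableSet_Ioo hd hinj]
  simp [smul_eq_mul]

lemma sqrt_sum_identity {p q : ℝ} (hp : 0 < p) (hq : 0 < q) (hpq : p + q = 2) :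
    1 / Real.sqrt p + 1 / Real.sqrt q
      = Real.sqrt 2 * Real.sqrt (1 + Real.sqrt (p * q)) / Real.sqrt (p * q) := by
  have hP := Real.sqrt_pos.mpr hp
  have hQ := Real.sqrt_pos.mpr hq
  have hPQ : Real.sqrt (p * q) = Real.sqrt p * Real.sqrt q := Real.sqrt_mul hp.le q
  have key : Real.sqrt p + Real.sqrt q
      = Real.sqrt 2 * Real.sqrt (1 + Real.sqrt p * Real.sqrt q) := by
    have h1 : Real.sqrt p + Real.sqrt q = Real.sqrt ((Real.sqrt p + Real.sqrt q)^2) :=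
      (Real.sqrt_sq (by positivity)).symm
    rw [h1, ← Real.sqrt_mul (by norm_num : (0:ℝ) ≤ 2)]
    congr 1
    have e1 : Real.sqrt p ^ 2 = p := Real.sq_sqrt hp.le
    have e2 : Real.sqrt q ^ 2 = q := Real.sq_sqrt hq.le
    nlinarith [e1, e2]
  rw [hPQ]
  field_simp
  nlinarith [key, hP, hQ, Real.sqrt_nonneg (2:ℝ), Real.sqrt_nonneg (1 + Real.sqrt p * Real.sqrt q)]

lemma bound_helper {X A B : ℝ} (hA : 0 < A) (hB : 0 < B) (h : A * B ≤ X) :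
    ‖1 / Real.sqrt X‖ ≤ (1 / Real.sqrt A) * (1 / Real.sqrt B) := by
  rw [Real.norm_of_nonneg (by positivity)]
  calc 1 / Real.sqrt X ≤ 1 / Real.sqrt (A * B) := inv_sqrt_le (mul_pos hA hB) h
    _ = (1 / Real.sqrt A) * (1 / Real.sqrt B) := by
        rw [Real.sqrt_mul hA.le]
        rw [one_div, one_div, one_div, mul_inv]

/-- integrability over Ioo via image substitution + congruence -/
lemma intOn_via_cov {a b a' b' : ℝ} {f f' : ℝ → ℝ} (hs : f '' Ioo a b = Ioo a' b')
    (hd : ∀ x ∈ Ioo a b, HasDerivWithinAt f (f' x) (Ioo a b) x)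
    (hinj : InjOn f (Ioo a b)) {g h : ℝ → ℝ}
    (hgh : ∀ x ∈ Ioo a b, |f' x| * g (f x) = h x)
    (hh : IntegrableOn h (Ioo a b)) : IntegrableOn g (Ioo a' b') := by
  rw [← hs]
  rw [MeasureTheory.integrableOn_image_iff_integrableOn_abs_deriv_smul measurableSet_Ioo hd hinj]
  apply hh.congr_fun ?_ measurableSet_Ioo
  intro x hx
  simpa [smul_eq_mul] using (hgh x hx).symm

lemma step1 (s : ℝ) (hs0 : 0 < s) (hs1 : s < 1) :
    ∫ t in Ioo (0:ℝ) 1, 1 / Real.sqrt (t*(1-t)*(1-s+2*s*t))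
      = ∫ v in Ioo (0:ℝ) 1, Real.sqrt 2 * Real.sqrt (1 + Real.sqrt (1 - s^2*v^2))
          / (Real.sqrt (1 - s^2*v^2) * Real.sqrt (1 - v^2)) := by
  set f1 : ℝ → ℝ := fun t => 1 / Real.sqrt (t*(1-t)*(1-s+2*s*t)) with hf1
  set hm : ℝ → ℝ := fun v => 1 / Real.sqrt ((1-v^2)*(1-s*v)) with hhm
  set hp : ℝ → ℝ := fun v => 1 / Real.sqrt ((1-v^2)*(1+s*v)) with hhp
  have key1 : ∀ v ∈ Ioo (0:ℝ) 1, 0 < 1 - v ∧ 0 < 1 + v ∧ 0 < 1 - s*v ∧ 0 < 1 + s*v := by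
    intro v hv
    obtain ⟨h1, h2⟩ := hv
    have h3 : s * v < s := mul_lt_of_lt_one_right hs0 h2
    have h4 : 0 < s * v := mul_pos hs0 h1
    exact ⟨by linarith, by linarith, by linarith, by linarith⟩
  -- integrability of hm, hp on (0,1)
  have ihm : IntegrableOn hm (Ioo (0:ℝ) 1) := by
    apply intOn_of_bound
      (contOn_inv_sqrt (by continuity) (fun v hv => by
        obtain ⟨h1, h2, h3, h4⟩ := key1 v hv
        nlinarith [mul_pos (mul_pos h1 h2) h3]))
      (fun v => (1 / Real.sqrt (1-s)) * (1 / Real.sqrt (1 - v)))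
      ((intOn_inv_sqrt_right (a := 0) (b := 1)).const_mul _)
    intro v hv
    obtain ⟨h1, h2, h3, h4⟩ := key1 v hv
    refine bound_helper (by linarith) h1 ?_
    nlinarith [mul_nonneg (mul_nonneg h1.le hv.1.le) (by linarith : (0:ℝ) ≤ 1 - s),
      mul_nonneg (mul_nonneg hs0.le h1.le) (by nlinarith : (0:ℝ) ≤ 1 - v^2)]
  have ihp : IntegrableOn hp (Ioo (0:ℝ) 1) := by
    apply intOn_of_bound
      (contOn_inv_sqrt (by continuity) (fun v hv => by
        obtain ⟨h1, h2, h3, h4⟩ := key1 v hv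
        nlinarith [mul_pos (mul_pos h1 h2) h4]))
      (fun v => (1 / Real.sqrt 1) * (1 / Real.sqrt (1 - v)))
      ((intOn_inv_sqrt_right (a := 0) (b := 1)).const_mul _)
    intro v hv
    obtain ⟨h1, h2, h3, h4⟩ := key1 v hv
    refine bound_helper (by norm_num) h1 ?_
    nlinarith [mul_nonneg (mul_nonneg h1.le hv.1.le) (by linarith : (0:ℝ) ≤ 1 + s*v),
      mul_nonneg (mul_nonneg h1.le hv.1.le) hs0.le]
  -- substitution v ↦ (1-v)/2 : (0,1) → (0,1/2)
  have himg1 : (fun v : ℝ => (1-v)/2) '' Ioo 0 1 = Ioo (0:ℝ) (1/2) := by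
    apply image_Ioo_of_inv (finv := fun t => 1 - 2*t)
    · intro x hx
      simp only [Set.mem_Ioo] at hx ⊢
      constructor <;> linarith [hx.1, hx.2]
    · intro y hy
      simp only [Set.mem_Ioo] at hy ⊢
      constructor <;> linarith [hy.1, hy.2]
    · intro y _
      show (1 - (1 - 2*y))/2 = y
      ring
  have hd1 : ∀ x ∈ Ioo (0:ℝ) 1, HasDerivWithinAt (fun v : ℝ => (1-v)/2)
      ((fun _ : ℝ => -1/2) x) (Ioo (0:ℝ) 1) x := by
    intro x _
    exact (((hasDerivAt_id x).const_sub 1).div_const 2).hasDerivWithinAt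
  have hinj1 : InjOn (fun v : ℝ => (1-v)/2) (Ioo (0:ℝ) 1) :=
    injOn_of_inv (finv := fun t => 1 - 2*t) (fun x _ => by show 1 - 2*((1-x)/2) = x; ring)
  have hpw1 : ∀ v ∈ Ioo (0:ℝ) 1, |((-1)/2 : ℝ)| * f1 ((1-v)/2) = hm v := by
    intro v hv
    rw [hf1]
    simp only
    rw [scale_inv_sqrt (r := (1/2:ℝ)) (by norm_num) (Q := (1-v^2)*(1-s*v)) (by ring)]
    rw [hhm]
    rw [show |((-1)/2 : ℝ)| = 1/2 by rw [abs_div, abs_neg, abs_one]; norm_num]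
    norm_num
    ring
  -- substitution v ↦ (1+v)/2 : (0,1) → (1/2,1)
  have himg2 : (fun v : ℝ => (1+v)/2) '' Ioo 0 1 = Ioo (1/2:ℝ) 1 := by
    apply image_Ioo_of_inv (finv := fun t => 2*t - 1)
    · intro x hx
      simp only [Set.mem_Ioo] at hx ⊢
      constructor <;> linarith [hx.1, hx.2]
    · intro y hy
      simp only [Set.mem_Ioo] at hy ⊢
      constructor <;> linarith [hy.1, hy.2]
    · intro y _
      show (1 + (2*y - 1))/2 = y
      ring
  have hd2 : ∀ x ∈ Ioo (0:ℝ) 1, HasDerivWithinAt (fun v : ℝ => (1+v)/2)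
      ((fun _ : ℝ => 1/2) x) (Ioo (0:ℝ) 1) x := by
    intro x _
    exact (((hasDerivAt_id x).const_add 1).div_const 2).hasDerivWithinAt
  have hinj2 : InjOn (fun v : ℝ => (1+v)/2) (Ioo (0:ℝ) 1) :=
    injOn_of_inv (finv := fun t => 2*t - 1) (fun x _ => by show 2*((1+x)/2) - 1 = x; ring)
  have hpw2 : ∀ v ∈ Ioo (0:ℝ) 1, |(1/2 : ℝ)| * f1 ((1+v)/2) = hp v := by
    intro v hv
    rw [hf1]
    simp only
    rw [scale_inv_sqrt (r := (1/2:ℝ)) (by norm_num) (Q := (1-v^2)*(1+s*v)) (by ring)]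
    rw [hhp]
    rw [show |(1/2 : ℝ)| = 1/2 by rw [abs_div, abs_one]; norm_num]
    norm_num
    ring
  -- split the integral
  have isplit1 : IntegrableOn f1 (Ioo (0:ℝ) (1/2)) :=
    intOn_via_cov himg1 hd1 hinj1 hpw1 ihm
  have isplit2 : IntegrableOn f1 (Ioo (1/2:ℝ) 1) :=
    intOn_via_cov himg2 hd2 hinj2 hpw2 ihp
  have hsplit : ∫ t in Ioo (0:ℝ) 1, f1 t
      = (∫ t in Ioo (0:ℝ) (1/2), f1 t) + ∫ t in Ioo (1/2:ℝ) 1, f1 t := by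
    rw [← Ioo_union_Ico_eq_Ioo (by norm_num : (0:ℝ) < 1/2) (by norm_num : (1/2:ℝ) ≤ 1)]
    rw [setIntegral_union (by
        exact (Set.Iio_disjoint_Ici le_rfl).mono Set.Ioo_subset_Iio_self Set.Ico_subset_Ici_self)
      measurableSet_Ico isplit1 (by
        rwa [IntegrableOn, Measure.restrict_congr_set MeasureTheory.Ioo_ae_eq_Ico.symm])]
    rw [MeasureTheory.integral_Ico_eq_integral_Ioo]
  have e1 : ∫ t in Ioo (0:ℝ) (1/2), f1 t = ∫ v in Ioo (0:ℝ) 1, hm v := by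
    rw [cov himg1 hd1 hinj1 f1]
    exact setIntegral_congr_fun measurableSet_Ioo (fun v hv => hpw1 v hv)
  have e2 : ∫ t in Ioo (1/2:ℝ) 1, f1 t = ∫ v in Ioo (0:ℝ) 1, hp v := by
    rw [cov himg2 hd2 hinj2 f1]
    exact setIntegral_congr_fun measurableSet_Ioo (fun v hv => hpw2 v hv)
  rw [hsplit, e1, e2, ← integral_add ihm ihp]
  apply setIntegral_congr_fun measurableSet_Ioo
  intro v hv
  obtain ⟨h1, h2, h3, h4⟩ := key1 v hv
  have hw : (0:ℝ) < 1 - v^2 := by nlinarith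
  have hWs := Real.sqrt_pos.mpr hw
  have hPQ : (0:ℝ) < 1 - s^2*v^2 := by nlinarith [mul_pos h3 h4]
  simp only [hhm, hhp]
  rw [Real.sqrt_mul hw.le (1-s*v), Real.sqrt_mul hw.le (1+s*v)]
  rw [show (1:ℝ) / (Real.sqrt (1-v^2) * Real.sqrt (1-s*v))
      = (1/Real.sqrt (1-v^2)) * (1/Real.sqrt (1-s*v)) by
    rw [one_div, mul_inv, one_div, one_div]]
  rw [show (1:ℝ) / (Real.sqrt (1-v^2) * Real.sqrt (1+s*v))
      = (1/Real.sqrt (1-v^2)) * (1/Real.sqrt (1+s*v)) by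
    rw [one_div, mul_inv, one_div, one_div]]
  rw [← mul_add, sqrt_sum_identity h3 h4 (by ring)]
  rw [show (1-s*v) * (1+s*v) = 1 - s^2*v^2 by ring]
  have hSQ := Real.sqrt_pos.mpr hPQ
  field_simp

set_option maxHeartbeats 1000000 in
lemma step2 (s c : ℝ) (hs0 : 0 < s) (hs1 : s < 1) (hc0 : 0 < c) (hc1 : c < 1)
    (hsc : s^2 + c^2 = 1) :
    ∫ v in Ioo (0:ℝ) 1, Real.sqrt 2 * Real.sqrt (1 + Real.sqrt (1 - s^2*v^2))
          / (Real.sqrt (1 - s^2*v^2) * Real.sqrt (1 - v^2))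
      = ∫ g in Ioo c 1, Real.sqrt 2 * (1 / Real.sqrt ((1-g)*((g-c)*(g+c)))) := by
  set f : ℝ → ℝ := fun g => Real.sqrt (1-g^2)/s with hf
  have hDpos : ∀ g ∈ Ioo c 1, (0:ℝ) < 1 - g^2 := by
    intro g hg
    obtain ⟨hg1, hg2⟩ := hg
    nlinarith
  have himg : f '' Ioo c 1 = Ioo (0:ℝ) 1 := by
    apply image_Ioo_of_inv (finv := fun v => Real.sqrt (1 - s^2*v^2))
    · intro g hg
      have h2 := hDpos g hg
      obtain ⟨hg1, hg2⟩ := hg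
      have hgpos : 0 < g := lt_trans hc0 hg1
      constructor
      · show 0 < Real.sqrt (1-g^2)/s
        exact div_pos (Real.sqrt_pos.mpr h2) hs0
      · show Real.sqrt (1-g^2)/s < 1
        rw [div_lt_one hs0]
        have : (1:ℝ) - g^2 < s^2 := by nlinarith
        calc Real.sqrt (1-g^2) < Real.sqrt (s^2) := Real.sqrt_lt_sqrt h2.le this
          _ = s := Real.sqrt_sq hs0.le
    · intro v hv
      obtain ⟨hv1, hv2⟩ := hv
      have hv3 : (0:ℝ) < 1 - v^2 := by nlinarith
      have hsv : s^2*v^2 < s^2 := by nlinarith [mul_pos (pow_pos hs0 2) hv3]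
      have harg : (0:ℝ) < 1 - s^2*v^2 := by nlinarith
      constructor
      · show c < Real.sqrt (1 - s^2*v^2)
        have : c = Real.sqrt (c^2) := (Real.sqrt_sq hc0.le).symm
        rw [this]
        apply Real.sqrt_lt_sqrt (sq_nonneg c)
        nlinarith
      · show Real.sqrt (1 - s^2*v^2) < 1
        have := Real.sqrt_lt_sqrt harg.le
          (show 1 - s^2*v^2 < 1 by nlinarith [mul_pos (pow_pos hs0 2) (pow_pos hv1 2)])
        rwa [Real.sqrt_one] at this
    · intro v hv
      obtain ⟨hv1, hv2⟩ := hv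
      have hsv : (0:ℝ) ≤ 1 - s^2*v^2 := by nlinarith
      show Real.sqrt (1 - Real.sqrt (1 - s^2*v^2)^2)/s = v
      rw [Real.sq_sqrt hsv, show 1 - (1 - s^2*v^2) = (s*v)^2 by ring,
        Real.sqrt_sq (by positivity : (0:ℝ) ≤ s*v)]
      field_simp
  have hinj : InjOn f (Ioo c 1) := by
    apply injOn_of_inv (finv := fun v => Real.sqrt (1 - s^2*v^2))
    intro g hg
    have h2 := hDpos g hg
    have hgpos : 0 < g := lt_trans hc0 hg.1
    show Real.sqrt (1 - s^2*(Real.sqrt (1-g^2)/s)^2) = g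
    rw [div_pow, Real.sq_sqrt h2.le, show 1 - s^2*((1-g^2)/s^2) = g^2 by field_simp; ring,
      Real.sqrt_sq hgpos.le]
  have hd : ∀ g ∈ Ioo c 1, HasDerivWithinAt f
      ((fun g => -g / (Real.sqrt (1-g^2) * s)) g) (Ioo c 1) g := by
    intro g hg
    have h2 := hDpos g hg
    have hsq : 0 < Real.sqrt (1-g^2) := Real.sqrt_pos.mpr h2
    have hinner : HasDerivAt (fun x : ℝ => 1 - x^2) (-(2*g)) g := by
      simpa using (hasDerivAt_pow 2 g).const_sub 1
    have hA : HasDerivAt (fun x : ℝ => Real.sqrt (1-x^2))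
        (1/(2*Real.sqrt (1-g^2)) * (-(2*g))) g :=
      (Real.hasDerivAt_sqrt h2.ne').comp g hinner
    have hB := hA.div_const s
    have : HasDerivAt f (-g / (Real.sqrt (1-g^2) * s)) g := by
      exact hB.congr_deriv (by field_simp)
    exact this.hasDerivWithinAt
  rw [cov himg hd hinj _]
  apply setIntegral_congr_fun measurableSet_Ioo
  intro g hg
  have h2 := hDpos g hg
  obtain ⟨hg1, hg2⟩ := hg
  have hgpos : 0 < g := lt_trans hc0 hg1
  have hsq : 0 < Real.sqrt (1-g^2) := Real.sqrt_pos.mpr h2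
  have e1 : 1 - s^2*(f g)^2 = g^2 := by
    rw [hf]
    simp only
    rw [div_pow, Real.sq_sqrt h2.le]
    field_simp
    ring
  have e3 : 1 - (f g)^2 = ((g-c)*(g+c))/s^2 := by
    rw [hf]
    simp only
    rw [div_pow, Real.sq_sqrt h2.le]
    field_simp
    linear_combination hsc
  show |(-g / (Real.sqrt (1-g^2) * s))| * (Real.sqrt 2 * Real.sqrt (1 + Real.sqrt (1 - s^2*(f g)^2))
          / (Real.sqrt (1 - s^2*(f g)^2) * Real.sqrt (1 - (f g)^2)))
      = Real.sqrt 2 * (1 / Real.sqrt ((1-g)*((g-c)*(g+c))))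
  rw [e1, e3, Real.sqrt_sq hgpos.le]
  have e4 : Real.sqrt (((g-c)*(g+c))/s^2) = (1/s) * Real.sqrt ((g-c)*(g+c)) := by
    rw [show ((g-c)*(g+c))/s^2 = (1/s)^2 * ((g-c)*(g+c)) by field_simp,
      Real.sqrt_mul (sq_nonneg _), Real.sqrt_sq (by positivity : (0:ℝ) ≤ 1/s)]
  rw [e4]
  have e5 : |(-g / (Real.sqrt (1-g^2) * s))| = g / (Real.sqrt (1-g^2) * s) := by
    rw [abs_div, abs_neg, abs_of_pos hgpos, abs_of_pos (by positivity)]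
  rw [e5]
  have hsplit2 : Real.sqrt (1-g^2) = Real.sqrt (1-g) * Real.sqrt (1+g) := by
    rw [show (1:ℝ)-g^2 = (1-g)*(1+g) by ring, Real.sqrt_mul (by linarith : (0:ℝ) ≤ 1-g)]
  have hsplit3 : Real.sqrt ((1-g)*((g-c)*(g+c)))
      = Real.sqrt (1-g) * Real.sqrt ((g-c)*(g+c)) :=
    Real.sqrt_mul (by linarith : (0:ℝ) ≤ 1-g) _
  rw [hsplit2, hsplit3]
  have ha : 0 < Real.sqrt (1-g) := Real.sqrt_pos.mpr (by linarith)
  have hb : 0 < Real.sqrt (1+g) := Real.sqrt_pos.mpr (by linarith)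
  have hd' : 0 < Real.sqrt ((g-c)*(g+c)) := Real.sqrt_pos.mpr (by nlinarith)
  have hgc1 : 0 < Real.sqrt (g-c) := Real.sqrt_pos.mpr (by linarith)
  have hgc2 : 0 < Real.sqrt (g+c) := Real.sqrt_pos.mpr (by linarith)
  field_simp [ha.ne', hb.ne', hgc1.ne', hgc2.ne', hgpos.ne', hs0.ne', hd'.ne']

set_option maxHeartbeats 1000000 in
lemma step3 (c : ℝ) (hc0 : 0 < c) (hc1 : c < 1) :
    ∫ g in Ioo c 1, Real.sqrt 2 * (1 / Real.sqrt ((1-g)*((g-c)*(g+c))))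
      = Real.sqrt 2 * ∫ t in Ioo (0:ℝ) 1, 1 / Real.sqrt (t*(1-t)*((1+c)-(1-c)*t)) := by
  set m : ℝ → ℝ := fun t => c*((1+c)+(1-c)*t)/((1+c)-(1-c)*t) with hmdef
  have hD : ∀ t : ℝ, t < 1 → (0:ℝ) < (1+c)-(1-c)*t := by
    intro t ht
    nlinarith
  have hmem : ∀ t ∈ Ioo (0:ℝ) 1, m t ∈ Ioo c 1 := by
    intro t ht
    obtain ⟨ht0, ht1⟩ := ht
    have hDt := hD t ht1
    constructor
    · show c < c*((1+c)+(1-c)*t)/((1+c)-(1-c)*t)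
      rw [lt_div_iff₀ hDt]
      nlinarith [mul_pos (mul_pos hc0 ht0) (show (0:ℝ) < 1-c by linarith)]
    · show c*((1+c)+(1-c)*t)/((1+c)-(1-c)*t) < 1
      rw [div_lt_one hDt]
      nlinarith [mul_pos (mul_pos (show (0:ℝ) < 1-c by linarith)
        (show (0:ℝ) < 1+c by linarith)) (show (0:ℝ) < 1-t by linarith)]
  have hmem' : ∀ g ∈ Ioo c 1, ((1+c)*(g-c))/((1-c)*(g+c)) ∈ Ioo (0:ℝ) 1 := by
    intro g hg
    obtain ⟨hg1, hg2⟩ := hg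
    have hden : (0:ℝ) < (1-c)*(g+c) := by nlinarith
    constructor
    · exact div_pos (by nlinarith) hden
    · rw [div_lt_one hden]
      nlinarith
  have himg : m '' Ioo 0 1 = Ioo c 1 := by
    apply image_Ioo_of_inv (finv := fun g => ((1+c)*(g-c))/((1-c)*(g+c)))
    · exact hmem
    · exact hmem'
    · intro g hg
      obtain ⟨hg1, hg2⟩ := hg
      have hden : ((1:ℝ)-c)*(g+c) ≠ 0 := ne_of_gt (by nlinarith)
      have ht01 := hmem' g ⟨hg1, hg2⟩
      have hDt0 := hD _ ht01.2
      show c*((1+c)+(1-c)*(((1+c)*(g-c))/((1-c)*(g+c))))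
          / ((1+c)-(1-c)*(((1+c)*(g-c))/((1-c)*(g+c)))) = g
      rw [div_eq_iff hDt0.ne']
      have hgc : g + c ≠ 0 := by linarith
      have h1c : 1 - c ≠ 0 := by linarith
      field_simp
      ring
  have hinj : InjOn m (Ioo (0:ℝ) 1) := by
    apply injOn_of_inv (finv := fun g => ((1+c)*(g-c))/((1-c)*(g+c)))
    intro t ht
    have hmt := hmem t ht
    have hDt := hD t ht.2
    have hden : ((1:ℝ)-c)*(m t + c) ≠ 0 := by
      have h1 : (0:ℝ) < m t + c := by nlinarith [hmt.1]
      exact ne_of_gt (mul_pos (by linarith) h1)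
    show ((1+c)*(m t - c))/((1-c)*(m t + c)) = t
    rw [div_eq_iff hden, hmdef]
    simp only
    field_simp
    ring
  have hd : ∀ t ∈ Ioo (0:ℝ) 1, HasDerivWithinAt m
      ((fun t => (2*c*(1-c^2))/((1+c)-(1-c)*t)^2) t) (Ioo (0:ℝ) 1) t := by
    intro t ht
    have hDt := hD t ht.2
    have hu : HasDerivAt (fun x : ℝ => c*((1+c)+(1-c)*x)) (c*((1-c)*1)) t :=
      (((hasDerivAt_id t).const_mul (1-c)).const_add (1+c)).const_mul c
    have hv : HasDerivAt (fun x : ℝ => (1+c)-(1-c)*x) (-((1-c)*1)) t :=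
      ((hasDerivAt_id t).const_mul (1-c)).const_sub (1+c)
    have hq := hu.div hv hDt.ne'
    have : HasDerivAt m ((2*c*(1-c^2))/((1+c)-(1-c)*t)^2) t := by
      exact hq.congr_deriv (by field_simp; ring)
    exact this.hasDerivWithinAt
  rw [← MeasureTheory.integral_const_mul, cov himg hd hinj _]
  apply setIntegral_congr_fun measurableSet_Ioo
  intro t ht
  obtain ⟨ht0, ht1⟩ := ht
  have hDt := hD t ht1
  have hmt := hmem t ⟨ht0, ht1⟩
  have hr : (0:ℝ) < (2*c*(1-c^2))/((1+c)-(1-c)*t)^2 := by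
    apply div_pos (by nlinarith) (by positivity)
  have hP : (1 - m t)*((m t - c)*(m t + c))
      = ((2*c*(1-c^2))/((1+c)-(1-c)*t)^2)^2 * (t*(1-t)*((1+c)-(1-c)*t)) := by
    rw [hmdef]
    simp only
    field_simp
    ring
  show |(2*c*(1-c^2))/((1+c)-(1-c)*t)^2|
      * (Real.sqrt 2 * (1 / Real.sqrt ((1 - m t)*((m t - c)*(m t + c)))))
      = Real.sqrt 2 * (1 / Real.sqrt (t*(1-t)*((1+c)-(1-c)*t)))
  rw [scale_inv_sqrt hr.le hP, abs_of_pos hr]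
  have cancel : ∀ (a b x : ℝ), a ≠ 0 → a * (b * (a⁻¹ * x)) = b * x := by
    intro a b x ha
    field_simp
  exact cancel _ _ _ hr.ne'

lemma main_core (s c : ℝ) (hs0 : 0 < s) (hs1 : s < 1) (hc0 : 0 < c)
    (hsc : s^2 + c^2 = 1) :
    (Real.sqrt (1-s))⁻¹ * ∫ t in Ioo (0:ℝ) 1, 1 / Real.sqrt (t*(1-t)*(1 - t*(-(2*s)/(1-s))))
      = Real.sqrt (2/(1+c)) * ∫ t in Ioo (0:ℝ) 1,
          1 / Real.sqrt (t*(1-t)*(1 - t*((1-c)/(1+c)))) := by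
  have hc1 : c < 1 := by nlinarith
  have h1s : (0:ℝ) < 1 - s := by linarith
  have h1c : (0:ℝ) < 1 + c := by linarith
  have hsqs : 0 < Real.sqrt (1-s) := Real.sqrt_pos.mpr h1s
  have hsqc : 0 < Real.sqrt (1+c) := Real.sqrt_pos.mpr h1c
  have hL : (Real.sqrt (1-s))⁻¹ * ∫ t in Ioo (0:ℝ) 1,
      1 / Real.sqrt (t*(1-t)*(1 - t*(-(2*s)/(1-s))))
      = ∫ t in Ioo (0:ℝ) 1, 1 / Real.sqrt (t*(1-t)*(1-s+2*s*t)) := by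
    rw [← MeasureTheory.integral_const_mul]
    apply setIntegral_congr_fun measurableSet_Ioo
    intro t ht
    have hP : t*(1-t)*(1 - t*(-(2*s)/(1-s)))
        = ((Real.sqrt (1-s))⁻¹)^2 * (t*(1-t)*(1-s+2*s*t)) := by
      rw [inv_pow, Real.sq_sqrt h1s.le]
      field_simp
      ring
    show (Real.sqrt (1-s))⁻¹ * (1 / Real.sqrt (t*(1-t)*(1 - t*(-(2*s)/(1-s)))))
        = 1 / Real.sqrt (t*(1-t)*(1-s+2*s*t))
    rw [scale_inv_sqrt (by positivity) hP, inv_inv, ← mul_assoc,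
      inv_mul_cancel₀ hsqs.ne', one_mul]
  have hR : Real.sqrt (2/(1+c)) * ∫ t in Ioo (0:ℝ) 1,
      1 / Real.sqrt (t*(1-t)*(1 - t*((1-c)/(1+c))))
      = Real.sqrt 2 * ∫ t in Ioo (0:ℝ) 1, 1 / Real.sqrt (t*(1-t)*((1+c)-(1-c)*t)) := by
    rw [← MeasureTheory.integral_const_mul, ← MeasureTheory.integral_const_mul]
    apply setIntegral_congr_fun measurableSet_Ioo
    intro t ht
    have hP : t*(1-t)*(1 - t*((1-c)/(1+c)))
        = ((Real.sqrt (1+c))⁻¹)^2 * (t*(1-t)*((1+c)-(1-c)*t)) := by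
      rw [inv_pow, Real.sq_sqrt h1c.le]
      field_simp
    show Real.sqrt (2/(1+c)) * (1 / Real.sqrt (t*(1-t)*(1 - t*((1-c)/(1+c)))))
        = Real.sqrt 2 * (1 / Real.sqrt (t*(1-t)*((1+c)-(1-c)*t)))
    rw [scale_inv_sqrt (by positivity) hP, inv_inv,
      show (2:ℝ)/(1+c) = 2 * (1+c)⁻¹ by ring,
      Real.sqrt_mul (by norm_num : (0:ℝ) ≤ 2), Real.sqrt_inv]
    rw [show Real.sqrt 2 * (Real.sqrt (1+c))⁻¹ * (Real.sqrt (1+c) * (1/Real.sqrt (t*(1-t)*((1+c)-(1-c)*t))))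
        = Real.sqrt 2 * ((Real.sqrt (1+c))⁻¹ * Real.sqrt (1+c)) * (1/Real.sqrt (t*(1-t)*((1+c)-(1-c)*t))) by ring,
      inv_mul_cancel₀ hsqc.ne', mul_one]
  rw [hL, hR, step1 s hs0 hs1, step2 s c hs0 hs1 hc0 hc1 hsc, step3 c hc0 hc1]


/-- `F(1/2,1/2,1;w)` via its Euler integral representation, valid for `w < 1`. -/
noncomputable def F12 (w : ℝ) : ℝ :=
  (1 / Real.pi) * ∫ t in (0:ℝ)..1, 1 / Real.sqrt (t * (1 - t) * (1 - t * w))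

theorem quadratic_transformation (z : ℝ) (hz : z ∈ Set.Ico (0:ℝ) 1) :
    (Real.sqrt (1 - Real.sqrt z))⁻¹ *
      F12 (-(2 * Real.sqrt z) / (1 - Real.sqrt z)) =
    Real.sqrt (2 / (1 + Real.sqrt (1 - z))) *
      F12 ((1 - Real.sqrt (1 - z)) / (1 + Real.sqrt (1 - z))) := by
  obtain ⟨hz0, hz1⟩ := hz
  rcases eq_or_lt_of_le hz0 with h0 | h0
  · rw [← h0]
    norm_num [Real.sqrt_zero, Real.sqrt_one]
  · have hs0 : 0 < Real.sqrt z := Real.sqrt_pos.mpr h0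
    have hs1 : Real.sqrt z < 1 := by
      have := Real.sqrt_lt_sqrt hz0 hz1
      rwa [Real.sqrt_one] at this
    have hc0 : 0 < Real.sqrt (1-z) := Real.sqrt_pos.mpr (by linarith)
    have hsc : (Real.sqrt z)^2 + (Real.sqrt (1-z))^2 = 1 := by
      rw [Real.sq_sqrt hz0, Real.sq_sqrt (by linarith : (0:ℝ) ≤ 1-z)]
      ring
    have key := main_core (Real.sqrt z) (Real.sqrt (1-z)) hs0 hs1 hc0 hsc
    simp only [F12]
    simp only [intervalIntegral.integral_of_le zero_le_one,
      MeasureTheory.integral_Ioc_eq_integral_Ioo]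
    linear_combination (1/Real.pi) * key
end

section
/- Let e₃ < e₂ < e₁ be real numbers and Q(s) = (s−e₁)(s−e₂)(s−e₃). For s ∈ (e₂, e₁), define I(s) = ∫_0^1 dw/√(w(1−w)(1 − λ(s)w)) where λ(s) = (e₂−e₃)(e₁−s)/((e₁−e₂)(s−e₃)). Then I satisfies the differential equation I''(s) + (1/(s−e₁) + 1/(s−e₂)) I'(s) + [(e₃−e₂)(e₃−e₁)/(4(s−e₃)Q(s))] I(s) = 0 on (e₂, e₁). -/
open Real MeasureTheory Set Metric intervalIntegral


noncomputable def PP (x w : ℝ) : ℝ := w * (1 - w) * (1 - x * w)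

noncomputable def f0 (x : ℝ) : ℝ := ∫ w in (0:ℝ)..1, (PP x w) ^ (-(1/2) : ℝ)
noncomputable def f1 (x : ℝ) : ℝ :=
  ∫ w in (0:ℝ)..1, 1/2 * (w^2*(1-w)) * (PP x w) ^ (-(3/2) : ℝ)
noncomputable def f2 (x : ℝ) : ℝ :=
  ∫ w in (0:ℝ)..1, 3/4 * (w^4*(1-w)^2) * (PP x w) ^ (-(5/2) : ℝ)

lemma one_div_sqrt (t : ℝ) : 1 / Real.sqrt t = t ^ (-(1/2) : ℝ) := by
  rcases lt_trichotomy t 0 with h | h | h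
  · rw [Real.sqrt_eq_zero_of_nonpos h.le, Real.rpow_def_of_neg h]
    rw [show (-(1/2) : ℝ) * π = -(π/2) by ring, Real.cos_neg, Real.cos_pi_div_two]
    simp
  · simp [h, Real.zero_rpow (by norm_num : (-(1/2):ℝ) ≠ 0)]
  · rw [Real.rpow_neg h.le, Real.sqrt_eq_rpow, one_div]

lemma bound_int : IntervalIntegrable
    (fun w : ℝ => (w*(1-w)) ^ (-(1/2) : ℝ)) volume 0 1 := by
  have h1 : IntervalIntegrable (fun w : ℝ => w ^ (-(1/2) : ℝ)) volume 0 1 :=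
    intervalIntegrable_rpow' (by norm_num)
  have h2 : IntervalIntegrable (fun w : ℝ => (1-w) ^ (-(1/2) : ℝ)) volume 0 1 := by
    have := ((intervalIntegrable_rpow' (a := 0) (b := 1) (r := -(1/2))
      (by norm_num)).comp_sub_left 1).symm
    simpa using this
  refine ((h1.add h2).const_mul 2).mono_fun ((by fun_prop : Measurable (fun w : ℝ => (w*(1-w)) ^ (-(1/2) : ℝ))).aestronglyMeasurable) ?_
  rw [Filter.EventuallyLE, ae_restrict_iff' measurableSet_uIoc]
  refine Filter.Eventually.of_forall fun w hw => ?_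
  rw [Set.uIoc_of_le (by norm_num : (0:ℝ) ≤ 1)] at hw
  obtain ⟨hw0, hw1⟩ := hw
  have hw1' : 0 ≤ 1 - w := by linarith
  have hnn : (0:ℝ) ≤ w * (1-w) := mul_nonneg hw0.le hw1'
  rw [Real.norm_of_nonneg (Real.rpow_nonneg hnn _)]
  rw [Real.norm_of_nonneg (by positivity)]
  rw [Real.mul_rpow hw0.le hw1']
  have key : ∀ u v : ℝ, 0 ≤ u → 0 ≤ v → (1:ℝ)/2 ≤ v →
      u ^ (-(1/2):ℝ) * v ^ (-(1/2):ℝ) ≤ 2 * (u ^ (-(1/2):ℝ) + v ^ (-(1/2):ℝ)) := by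
    intro u v hu hv hv2
    have h2v : v ^ (-(1/2):ℝ) ≤ ((1:ℝ)/2) ^ (-(1/2):ℝ) :=
      Real.rpow_le_rpow_of_nonpos (by norm_num) hv2 (by norm_num)
    have h12 : ((1:ℝ)/2) ^ (-(1/2):ℝ) ≤ 2 := by
      have := Real.rpow_le_rpow_of_exponent_ge (x := (1/2:ℝ)) (by norm_num) (by norm_num)
        (show (-1:ℝ) ≤ -(1/2) by norm_num)
      rw [Real.rpow_neg_one] at this
      norm_num at this ⊢
      linarith
    have hu' : 0 ≤ u ^ (-(1/2):ℝ) := Real.rpow_nonneg hu _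
    have hv' : 0 ≤ v ^ (-(1/2):ℝ) := Real.rpow_nonneg hv _
    have := mul_le_mul_of_nonneg_left (h2v.trans h12) hu'
    linarith
  rcases le_total w (1/2) with hc | hc
  · exact key w (1-w) hw0.le hw1' (by linarith)
  · have h := key (1-w) w hw1' hw0.le (by linarith)
    have hmc : w ^ (-(1/2):ℝ) * (1-w) ^ (-(1/2):ℝ)
        = (1-w) ^ (-(1/2):ℝ) * w ^ (-(1/2):ℝ) := mul_comm _ _
    rw [hmc]; linarith

lemma integrable_of_bnd (f : ℝ → ℝ) (hm : Measurable f) (C : ℝ)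
    (hb : ∀ w ∈ Ioc (0:ℝ) 1, ‖f w‖ ≤ C * (w*(1-w)) ^ (-(1/2):ℝ)) :
    IntervalIntegrable f volume 0 1 := by
  refine (bound_int.const_mul C).mono_fun hm.aestronglyMeasurable ?_
  rw [Filter.EventuallyLE, ae_restrict_iff' measurableSet_uIoc]
  refine Filter.Eventually.of_forall fun w hw => ?_
  rw [Set.uIoc_of_le (by norm_num : (0:ℝ) ≤ 1)] at hw
  exact (hb w hw).trans (le_abs_self _)

lemma PP_lb {y w δ : ℝ} (hy0 : 0 ≤ y) (hyδ : y ≤ 1 - δ) (hw : w ∈ Ioc (0:ℝ) 1) :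
    δ * (w * (1-w)) ≤ PP y w := by
  obtain ⟨hw0, hw1⟩ := hw
  have h1 : y * w ≤ y := by nlinarith
  have h2 : δ ≤ 1 - y * w := by linarith
  have hu : 0 ≤ w * (1-w) := mul_nonneg hw0.le (by linarith)
  calc δ * (w * (1-w)) = (w * (1-w)) * δ := by ring
    _ ≤ (w * (1-w)) * (1 - y*w) := mul_le_mul_of_nonneg_left h2 hu
    _ = PP y w := by rw [PP]

lemma PP_pos {y w δ : ℝ} (hδ : 0 < δ) (hy0 : 0 ≤ y) (hyδ : y ≤ 1 - δ)
    (hw : w ∈ Ioo (0:ℝ) 1) : 0 < PP y w := by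
  refine lt_of_lt_of_le ?_ (PP_lb hy0 hyδ ⟨hw.1, hw.2.le⟩)
  have : 0 < w * (1-w) := mul_pos hw.1 (by linarith [hw.2])
  positivity

lemma split1 (u : ℝ) (hu : 0 < u) : u ^ (-(1/2):ℝ) = u ^ (-(1/2):ℝ) := rfl

lemma split3 (u : ℝ) (hu : 0 < u) : u ^ (-(3/2):ℝ) = u⁻¹ * u ^ (-(1/2):ℝ) := by
  rw [show (-(3/2):ℝ) = (-1) + (-(1/2)) by norm_num, Real.rpow_add hu, Real.rpow_neg_one]

lemma split5 (u : ℝ) (hu : 0 < u) : u ^ (-(5/2):ℝ) = u⁻¹ * u⁻¹ * u ^ (-(1/2):ℝ) := by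
  rw [show (-(5/2):ℝ) = (-1) + ((-1) + (-(1/2))) by norm_num, Real.rpow_add hu,
    Real.rpow_add hu, Real.rpow_neg_one, mul_assoc]

lemma bnd0 {y w δ : ℝ} (hδ : 0 < δ) (hy0 : 0 ≤ y) (hyδ : y ≤ 1 - δ)
    (hw : w ∈ Ioo (0:ℝ) 1) :
    ‖(PP y w) ^ (-(1/2) : ℝ)‖ ≤ δ^(-(1/2):ℝ) * (w*(1-w)) ^ (-(1/2):ℝ) := by
  obtain ⟨hw0, hw1⟩ := hw
  have hu : 0 < w * (1-w) := mul_pos hw0 (by linarith)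
  have hPP : 0 < PP y w := PP_pos hδ hy0 hyδ ⟨hw0, hw1⟩
  rw [Real.norm_of_nonneg (Real.rpow_nonneg hPP.le _)]
  calc (PP y w) ^ (-(1/2):ℝ) ≤ (δ * (w*(1-w))) ^ (-(1/2):ℝ) :=
        Real.rpow_le_rpow_of_nonpos (by positivity) (PP_lb hy0 hyδ ⟨hw0, hw1.le⟩) (by norm_num)
    _ = δ^(-(1/2):ℝ) * (w*(1-w)) ^ (-(1/2):ℝ) := Real.mul_rpow hδ.le hu.le

lemma bnd1 {y w δ : ℝ} (hδ : 0 < δ) (hy0 : 0 ≤ y) (hyδ : y ≤ 1 - δ)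
    (hw : w ∈ Ioo (0:ℝ) 1) :
    ‖1/2 * (w^2*(1-w)) * (PP y w) ^ (-(3/2) : ℝ)‖ ≤
      (1/2 * δ^(-(3/2):ℝ)) * (w*(1-w)) ^ (-(1/2):ℝ) := by
  obtain ⟨hw0, hw1⟩ := hw
  have hu : 0 < w * (1-w) := mul_pos hw0 (by linarith)
  have hPP : 0 < PP y w := PP_pos hδ hy0 hyδ ⟨hw0, hw1⟩
  have h1 : (PP y w) ^ (-(3/2):ℝ) ≤ (δ * (w*(1-w))) ^ (-(3/2):ℝ) :=
    Real.rpow_le_rpow_of_nonpos (by positivity) (PP_lb hy0 hyδ ⟨hw0, hw1.le⟩) (by norm_num)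
  rw [Real.mul_rpow hδ.le hu.le] at h1
  have hkey : (w^2*(1-w)) * (w*(1-w))^(-(3/2):ℝ) = w * (w*(1-w))^(-(1/2):ℝ) := by
    rw [split3 _ hu]
    have hne : w * (1-w) ≠ 0 := hu.ne'
    field_simp
  have hnn : 0 ≤ w^2*(1-w) := by nlinarith
  have hr2 : 0 ≤ (w*(1-w))^(-(1/2):ℝ) := Real.rpow_nonneg hu.le _
  rw [Real.norm_of_nonneg (by positivity)]
  calc 1/2 * (w^2*(1-w)) * (PP y w) ^ (-(3/2):ℝ)
      ≤ 1/2 * (w^2*(1-w)) * (δ^(-(3/2):ℝ) * (w*(1-w))^(-(3/2):ℝ)) :=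
        mul_le_mul_of_nonneg_left h1 (by positivity)
    _ = (1/2 * δ^(-(3/2):ℝ)) * ((w^2*(1-w)) * (w*(1-w))^(-(3/2):ℝ)) := by ring
    _ = (1/2 * δ^(-(3/2):ℝ)) * (w * (w*(1-w))^(-(1/2):ℝ)) := by rw [hkey]
    _ ≤ (1/2 * δ^(-(3/2):ℝ)) * (1 * (w*(1-w))^(-(1/2):ℝ)) :=
        mul_le_mul_of_nonneg_left (mul_le_mul_of_nonneg_right hw1.le hr2) (by positivity)
    _ = (1/2 * δ^(-(3/2):ℝ)) * (w*(1-w))^(-(1/2):ℝ) := by ring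

lemma bnd2 {y w δ : ℝ} (hδ : 0 < δ) (hy0 : 0 ≤ y) (hyδ : y ≤ 1 - δ)
    (hw : w ∈ Ioo (0:ℝ) 1) :
    ‖3/4 * (w^4*(1-w)^2) * (PP y w) ^ (-(5/2) : ℝ)‖ ≤
      (3/4 * δ^(-(5/2):ℝ)) * (w*(1-w)) ^ (-(1/2):ℝ) := by
  obtain ⟨hw0, hw1⟩ := hw
  have hu : 0 < w * (1-w) := mul_pos hw0 (by linarith)
  have hPP : 0 < PP y w := PP_pos hδ hy0 hyδ ⟨hw0, hw1⟩
  have h1 : (PP y w) ^ (-(5/2):ℝ) ≤ (δ * (w*(1-w))) ^ (-(5/2):ℝ) :=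
    Real.rpow_le_rpow_of_nonpos (by positivity) (PP_lb hy0 hyδ ⟨hw0, hw1.le⟩) (by norm_num)
  rw [Real.mul_rpow hδ.le hu.le] at h1
  have hkey : (w^4*(1-w)^2) * (w*(1-w))^(-(5/2):ℝ) = w^2 * (w*(1-w))^(-(1/2):ℝ) := by
    rw [split5 _ hu]
    have hne : w * (1-w) ≠ 0 := hu.ne'
    field_simp
  have hnn : 0 ≤ w^4*(1-w)^2 := by positivity
  have hr2 : 0 ≤ (w*(1-w))^(-(1/2):ℝ) := Real.rpow_nonneg hu.le _
  have hw2 : w^2 ≤ 1 := by nlinarith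
  rw [Real.norm_of_nonneg (by positivity)]
  calc 3/4 * (w^4*(1-w)^2) * (PP y w) ^ (-(5/2):ℝ)
      ≤ 3/4 * (w^4*(1-w)^2) * (δ^(-(5/2):ℝ) * (w*(1-w))^(-(5/2):ℝ)) :=
        mul_le_mul_of_nonneg_left h1 (by positivity)
    _ = (3/4 * δ^(-(5/2):ℝ)) * ((w^4*(1-w)^2) * (w*(1-w))^(-(5/2):ℝ)) := by ring
    _ = (3/4 * δ^(-(5/2):ℝ)) * (w^2 * (w*(1-w))^(-(1/2):ℝ)) := by rw [hkey]
    _ ≤ (3/4 * δ^(-(5/2):ℝ)) * (1 * (w*(1-w))^(-(1/2):ℝ)) :=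
        mul_le_mul_of_nonneg_left (mul_le_mul_of_nonneg_right hw2 hr2) (by positivity)
    _ = (3/4 * δ^(-(5/2):ℝ)) * (w*(1-w))^(-(1/2):ℝ) := by ring

@[fun_prop]
lemma PP_measurable (y : ℝ) : Measurable (fun w => PP y w) := by unfold PP; fun_prop

lemma PP_one (y : ℝ) : PP y 1 = 0 := by simp [PP]

lemma ae_ne_one : ∀ᵐ w : ℝ, w ≠ 1 := by
  refine ae_iff.mpr ?_
  have : {w : ℝ | ¬ w ≠ 1} = {1} := by ext w; simp
  rw [this]
  exact Real.volume_singleton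

lemma int0 {y δ : ℝ} (hδ : 0 < δ) (hy0 : 0 ≤ y) (hyδ : y ≤ 1 - δ) :
    IntervalIntegrable (fun w => (PP y w) ^ (-(1/2):ℝ)) volume 0 1 := by
  refine integrable_of_bnd _ (by fun_prop) (δ^(-(1/2):ℝ)) fun w hw => ?_
  rcases eq_or_lt_of_le hw.2 with h1 | h1
  · subst h1
    rw [PP_one, Real.zero_rpow (by norm_num : (-(1/2):ℝ) ≠ 0)]
    simp only [norm_zero]
    positivity
  · exact bnd0 hδ hy0 hyδ ⟨hw.1, h1⟩

lemma int1 {y δ : ℝ} (hδ : 0 < δ) (hy0 : 0 ≤ y) (hyδ : y ≤ 1 - δ) :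
    IntervalIntegrable (fun w => 1/2 * (w^2*(1-w)) * (PP y w) ^ (-(3/2):ℝ)) volume 0 1 := by
  refine integrable_of_bnd _ (by fun_prop) (1/2 * δ^(-(3/2):ℝ)) fun w hw => ?_
  rcases eq_or_lt_of_le hw.2 with h1 | h1
  · subst h1
    rw [PP_one, Real.zero_rpow (by norm_num : (-(3/2):ℝ) ≠ 0)]
    simp only [mul_zero, norm_zero]
    positivity
  · exact bnd1 hδ hy0 hyδ ⟨hw.1, h1⟩

lemma int2 {y δ : ℝ} (hδ : 0 < δ) (hy0 : 0 ≤ y) (hyδ : y ≤ 1 - δ) :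
    IntervalIntegrable (fun w => 3/4 * (w^4*(1-w)^2) * (PP y w) ^ (-(5/2):ℝ)) volume 0 1 := by
  refine integrable_of_bnd _ (by fun_prop) (3/4 * δ^(-(5/2):ℝ)) fun w hw => ?_
  rcases eq_or_lt_of_le hw.2 with h1 | h1
  · subst h1
    rw [PP_one, Real.zero_rpow (by norm_num : (-(5/2):ℝ) ≠ 0)]
    simp only [mul_zero, norm_zero]
    positivity
  · exact bnd2 hδ hy0 hyδ ⟨hw.1, h1⟩

lemma ball_prop {x y : ℝ} (hx : x ∈ Ioo (0:ℝ) 1)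
    (hy : y ∈ ball x (min (x/2) ((1-x)/4))) : 0 ≤ y ∧ y ≤ 1 - (1-x)/2 := by
  rw [mem_ball, Real.dist_eq, abs_lt] at hy
  obtain ⟨h1, h2⟩ := hy
  have ha := min_le_left (x/2) ((1-x)/4)
  have hb := min_le_right (x/2) ((1-x)/4)
  constructor <;> [linarith [hx.1]; linarith [hx.2]]

lemma hasDeriv_f0 {x : ℝ} (hx : x ∈ Ioo (0:ℝ) 1) : HasDerivAt f0 (f1 x) x := by
  obtain ⟨hx0, hx1⟩ := hx
  set ε := min (x/2) ((1-x)/4) with hεdef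
  have hε : 0 < ε := lt_min (by linarith) (by linarith)
  set δ := (1-x)/2 with hδdef
  have hδ : 0 < δ := by rw [hδdef]; linarith
  have key := intervalIntegral.hasDerivAt_integral_of_dominated_loc_of_deriv_le
    (F := fun y w => (PP y w) ^ (-(1/2):ℝ))
    (F' := fun y w => 1/2 * (w^2*(1-w)) * (PP y w) ^ (-(3/2):ℝ))
    (bound := fun w => (1/2 * δ^(-(3/2):ℝ)) * (w*(1-w)) ^ (-(1/2):ℝ))
    (μ := volume) (a := 0) (b := 1) (x₀ := x) (ball_mem_nhds x hε)
    (Filter.Eventually.of_forall fun y =>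
      ((by fun_prop : Measurable fun w => (PP y w) ^ (-(1/2):ℝ))).aestronglyMeasurable)
    (int0 hδ hx0.le (by rw [hδdef]; linarith))
    ((by fun_prop : Measurable fun w => 1/2 * (w^2*(1-w)) * (PP x w) ^ (-(3/2):ℝ))).aestronglyMeasurable
    ?_ (bound_int.const_mul _) ?_
  · exact key.2
  · filter_upwards [ae_ne_one] with w hw1
    intro hw y hy'
    rw [Set.uIoc_of_le (by norm_num : (0:ℝ) ≤ 1)] at hw
    obtain ⟨hy0, hyδ⟩ := ball_prop ⟨hx0, hx1⟩ hy'
    exact bnd1 hδ hy0 hyδ ⟨hw.1, lt_of_le_of_ne hw.2 hw1⟩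
  · filter_upwards [ae_ne_one] with w hw1
    intro hw y hy'
    rw [Set.uIoc_of_le (by norm_num : (0:ℝ) ≤ 1)] at hw
    obtain ⟨hy0, hyδ⟩ := ball_prop ⟨hx0, hx1⟩ hy'
    have hwIoo : w ∈ Ioo (0:ℝ) 1 := ⟨hw.1, lt_of_le_of_ne hw.2 hw1⟩
    have hPP : 0 < PP y w := PP_pos hδ hy0 hyδ hwIoo
    have hlin : HasDerivAt (fun y : ℝ => PP y w) (w * (1-w) * (-w)) y := by
      have h1 : HasDerivAt (fun y : ℝ => 1 - y*w) (-w) y := by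
        simpa using ((hasDerivAt_id y).mul_const w).const_sub 1
      simpa [PP] using h1.const_mul (w * (1-w))
    have := hlin.rpow_const (p := (-(1/2):ℝ)) (Or.inl hPP.ne')
    refine this.congr_deriv ?_
    rw [show ((-(1/2):ℝ) - 1) = (-(3/2):ℝ) by norm_num]
    ring

lemma hasDeriv_f1 {x : ℝ} (hx : x ∈ Ioo (0:ℝ) 1) : HasDerivAt f1 (f2 x) x := by
  obtain ⟨hx0, hx1⟩ := hx
  set ε := min (x/2) ((1-x)/4) with hεdef
  have hε : 0 < ε := lt_min (by linarith) (by linarith)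
  set δ := (1-x)/2 with hδdef
  have hδ : 0 < δ := by rw [hδdef]; linarith
  have key := intervalIntegral.hasDerivAt_integral_of_dominated_loc_of_deriv_le
    (F := fun y w => 1/2 * (w^2*(1-w)) * (PP y w) ^ (-(3/2):ℝ))
    (F' := fun y w => 3/4 * (w^4*(1-w)^2) * (PP y w) ^ (-(5/2):ℝ))
    (bound := fun w => (3/4 * δ^(-(5/2):ℝ)) * (w*(1-w)) ^ (-(1/2):ℝ))
    (μ := volume) (a := 0) (b := 1) (x₀ := x) (ball_mem_nhds x hε)
    (Filter.Eventually.of_forall fun y =>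
      ((by fun_prop : Measurable fun w => 1/2 * (w^2*(1-w)) * (PP y w) ^ (-(3/2):ℝ))).aestronglyMeasurable)
    (int1 hδ hx0.le (by rw [hδdef]; linarith))
    ((by fun_prop : Measurable fun w => 3/4 * (w^4*(1-w)^2) * (PP x w) ^ (-(5/2):ℝ))).aestronglyMeasurable
    ?_ (bound_int.const_mul _) ?_
  · exact key.2
  · filter_upwards [ae_ne_one] with w hw1
    intro hw y hy'
    rw [Set.uIoc_of_le (by norm_num : (0:ℝ) ≤ 1)] at hw
    obtain ⟨hy0, hyδ⟩ := ball_prop ⟨hx0, hx1⟩ hy'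
    exact bnd2 hδ hy0 hyδ ⟨hw.1, lt_of_le_of_ne hw.2 hw1⟩
  · filter_upwards [ae_ne_one] with w hw1
    intro hw y hy'
    rw [Set.uIoc_of_le (by norm_num : (0:ℝ) ≤ 1)] at hw
    obtain ⟨hy0, hyδ⟩ := ball_prop ⟨hx0, hx1⟩ hy'
    have hwIoo : w ∈ Ioo (0:ℝ) 1 := ⟨hw.1, lt_of_le_of_ne hw.2 hw1⟩
    have hPP : 0 < PP y w := PP_pos hδ hy0 hyδ hwIoo
    have hlin : HasDerivAt (fun y : ℝ => PP y w) (w * (1-w) * (-w)) y := by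
      have h1 : HasDerivAt (fun y : ℝ => 1 - y*w) (-w) y := by
        simpa using ((hasDerivAt_id y).mul_const w).const_sub 1
      simpa [PP] using h1.const_mul (w * (1-w))
    have := (hlin.rpow_const (p := (-(3/2):ℝ)) (Or.inl hPP.ne')).const_mul (1/2 * (w^2*(1-w)))
    refine this.congr_deriv ?_
    rw [show ((-(3/2):ℝ) - 1) = (-(5/2):ℝ) by norm_num]
    ring

lemma rpow_half_sq {t : ℝ} (ht : 0 < t) : (t ^ (-(1/2):ℝ))^2 = t⁻¹ := by
  rw [← Real.rpow_natCast (t ^ (-(1/2):ℝ)) 2, ← Real.rpow_mul ht.le]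
  norm_num [Real.rpow_neg_one]

lemma rpow_half_cube {t : ℝ} (ht : 0 < t) : t ^ (-(3/2):ℝ) = (t ^ (-(1/2):ℝ))^3 := by
  rw [← Real.rpow_natCast (t ^ (-(1/2):ℝ)) 3, ← Real.rpow_mul ht.le]
  norm_num

lemma rpow_half_five {t : ℝ} (ht : 0 < t) : t ^ (-(5/2):ℝ) = (t ^ (-(1/2):ℝ))^5 := by
  rw [← Real.rpow_natCast (t ^ (-(1/2):ℝ)) 5, ← Real.rpow_mul ht.le]
  norm_num

lemma f_ode {x : ℝ} (hx : x ∈ Ioo (0:ℝ) 1) :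
    x*(1-x)*f2 x + (1-2*x)*f1 x - f0 x / 4 = 0 := by
  obtain ⟨hx0, hx1⟩ := hx
  have hδ : (0:ℝ) < 1 - x := by linarith
  have hyδ : x ≤ 1 - (1-x) := by linarith
  set g : ℝ → ℝ := fun w => -(1/2) * ((w*(1-w)) ^ ((1/2):ℝ) * (1-x*w) ^ (-(3/2):ℝ))
    with hgdef
  set combo : ℝ → ℝ := fun w =>
      x*(1-x)*(3/4 * (w^4*(1-w)^2) * (PP x w) ^ (-(5/2):ℝ))
      + (1-2*x)*(1/2 * (w^2*(1-w)) * (PP x w) ^ (-(3/2):ℝ))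
      - (PP x w) ^ (-(1/2):ℝ) / 4 with hcombodef
  have hint2 : IntervalIntegrable
      (fun w => x*(1-x)*(3/4 * (w^4*(1-w)^2) * (PP x w) ^ (-(5/2):ℝ))) volume 0 1 :=
    (int2 hδ hx0.le hyδ).const_mul _
  have hint1 : IntervalIntegrable
      (fun w => (1-2*x)*(1/2 * (w^2*(1-w)) * (PP x w) ^ (-(3/2):ℝ))) volume 0 1 :=
    (int1 hδ hx0.le hyδ).const_mul _
  have hint0 : IntervalIntegrable
      (fun w => (PP x w) ^ (-(1/2):ℝ) / 4) volume 0 1 :=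
    (int0 hδ hx0.le hyδ).div_const 4
  have hcont : ContinuousOn g (Icc 0 1) := by
    intro w hw
    refine ContinuousAt.continuousWithinAt ?_
    have h1 : ContinuousAt (fun w : ℝ => (w*(1-w)) ^ ((1/2):ℝ)) w := by
      exact ContinuousAt.rpow_const (by fun_prop) (Or.inr (by norm_num))
    have hvx : 1 - x*w ≠ 0 := by
      have : x*w ≤ x := by nlinarith [hw.1, hw.2]
      nlinarith
    have h2 : ContinuousAt (fun w : ℝ => (1-x*w) ^ (-(3/2):ℝ)) w := by
      exact ContinuousAt.rpow_const (by fun_prop) (Or.inl hvx)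
    exact (continuousAt_const.mul (h1.mul h2))
  have hg0 : g 0 = 0 := by
    simp [hgdef, Real.zero_rpow (by norm_num : ((1/2):ℝ) ≠ 0)]
  have hg1 : g 1 = 0 := by
    simp [hgdef, Real.zero_rpow (by norm_num : ((1/2):ℝ) ≠ 0)]
  have hderiv : ∀ w ∈ Ioo (0:ℝ) 1, HasDerivWithinAt g (combo w) (Ioi w) w := by
    intro w hw
    obtain ⟨hw0, hw1⟩ := hw
    have hu : 0 < w*(1-w) := mul_pos hw0 (by linarith)
    have hv : 0 < 1-x*w := by nlinarith
    have hmul : HasDerivAt (fun w : ℝ => w*(1-w)) (1-2*w) w := by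
      have := (hasDerivAt_id w).mul ((hasDerivAt_id w).const_sub 1)
      refine this.congr_deriv ?_
      simp; ring
    have hAin : HasDerivAt (fun w : ℝ => (w*(1-w)) ^ ((1/2):ℝ))
        ((1-2*w) * ((1/2):ℝ) * (w*(1-w)) ^ (((1/2):ℝ)-1)) w :=
      hmul.rpow_const (Or.inl hu.ne')
    have hvmul : HasDerivAt (fun w : ℝ => 1-x*w) (-x) w := by
      simpa using ((hasDerivAt_id w).const_mul x).const_sub 1
    have hBin : HasDerivAt (fun w : ℝ => (1-x*w) ^ (-(3/2):ℝ))
        ((-x) * (-(3/2):ℝ) * (1-x*w) ^ ((-(3/2):ℝ)-1)) w :=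
      hvmul.rpow_const (Or.inl hv.ne')
    have hg : HasDerivAt g (-(1/2) * ((1-2*w) * ((1/2):ℝ) * (w*(1-w)) ^ (((1/2):ℝ)-1)
        * (1-x*w) ^ (-(3/2):ℝ)
        + (w*(1-w)) ^ ((1/2):ℝ) * ((-x) * (-(3/2):ℝ) * (1-x*w) ^ ((-(3/2):ℝ)-1)))) w :=
      (hAin.mul hBin).const_mul (-(1/2))
    have heq : -(1/2) * ((1-2*w) * ((1/2):ℝ) * (w*(1-w)) ^ (((1/2):ℝ)-1)
        * (1-x*w) ^ (-(3/2):ℝ)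
        + (w*(1-w)) ^ ((1/2):ℝ) * ((-x) * (-(3/2):ℝ) * (1-x*w) ^ ((-(3/2):ℝ)-1)))
        = combo w := by
      set a := (w*(1-w)) ^ (-(1/2):ℝ) with hadef
      set b := (1-x*w) ^ (-(1/2):ℝ) with hbdef
      have ha : a^2 * (w*(1-w)) = 1 := by
        rw [hadef, rpow_half_sq hu, inv_mul_cancel₀ hu.ne']
      have hb : b^2 * (1-x*w) = 1 := by
        rw [hbdef, rpow_half_sq hv, inv_mul_cancel₀ hv.ne']
      have e1 : (w*(1-w)) ^ (((1/2):ℝ)-1) = a := by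
        rw [show (((1/2):ℝ)-1) = (-(1/2):ℝ) by norm_num, hadef]
      have e2 : (w*(1-w)) ^ ((1/2):ℝ) = (w*(1-w)) * a := by
        rw [show ((1/2):ℝ) = 1 + (-(1/2):ℝ) by norm_num, Real.rpow_add hu,
          Real.rpow_one, hadef]
      have e3 : (1-x*w) ^ (-(3/2):ℝ) = b^3 := by rw [rpow_half_cube hv, hbdef]
      have e4 : (1-x*w) ^ ((-(3/2):ℝ)-1) = b^5 := by
        rw [show ((-(3/2):ℝ)-1) = (-(5/2):ℝ) by norm_num, rpow_half_five hv, hbdef]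
      have hPPuv : PP x w = (w*(1-w)) * (1-x*w) := rfl
      have hPPpos : 0 < PP x w := by rw [hPPuv]; positivity
      have e5 : (PP x w) ^ (-(1/2):ℝ) = a * b := by
        rw [hPPuv, Real.mul_rpow hu.le hv.le, hadef, hbdef]
      have e6 : (PP x w) ^ (-(3/2):ℝ) = a^3 * b^3 := by
        rw [rpow_half_cube hPPpos, e5, mul_pow]
      have e7 : (PP x w) ^ (-(5/2):ℝ) = a^5 * b^5 := by
        rw [rpow_half_five hPPpos, e5, mul_pow]
      rw [hcombodef]
      simp only [e1, e2, e3, e4, e5, e6, e7]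
      linear_combination (w*a*b^3*(x-1/2) + (3/4)*x*(x-1)*w^2*a*b^5
        + (3/4)*x*(x-1)*w^3*(1-w)*a^3*b^5) * ha + (-(1/4)*a*b - (3/4)*w*x*a*b^3) * hb
    exact (heq ▸ hg).hasDerivWithinAt
  have hcomboint : IntervalIntegrable combo volume 0 1 := (hint2.add hint1).sub hint0
  have hftc : (∫ w in (0:ℝ)..1, combo w) = g 1 - g 0 :=
    intervalIntegral.integral_eq_sub_of_hasDeriv_right_of_le (by norm_num) hcont hderiv
      hcomboint
  have hsplit : (∫ w in (0:ℝ)..1, combo w)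
      = x*(1-x)*f2 x + (1-2*x)*f1 x - f0 x / 4 := by
    rw [hcombodef]
    rw [intervalIntegral.integral_sub (hint2.add hint1) hint0,
      intervalIntegral.integral_add hint2 hint1,
      intervalIntegral.integral_const_mul, intervalIntegral.integral_const_mul,
      intervalIntegral.integral_div]
    rfl
  rw [← hsplit, hftc, hg1, hg0, sub_zero]

theorem hypergeometric_ode (e₁ e₂ e₃ : ℝ) (h32 : e₃ < e₂) (h21 : e₂ < e₁)
    (I : ℝ → ℝ)
    (hI : ∀ s, I s = ∫ w in (0:ℝ)..1,
      1 / Real.sqrt (w * (1 - w) *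
        (1 - ((e₂ - e₃) * (e₁ - s) / ((e₁ - e₂) * (s - e₃))) * w))) :
    ∀ s ∈ Set.Ioo e₂ e₁,
      deriv (deriv I) s + (1 / (s - e₁) + 1 / (s - e₂)) * deriv I s +
        ((e₃ - e₂) * (e₃ - e₁) /
          (4 * (s - e₃) * ((s - e₁) * (s - e₂) * (s - e₃)))) * I s = 0 := by
  set lam : ℝ → ℝ := fun s => (e₂ - e₃) * (e₁ - s) / ((e₁ - e₂) * (s - e₃)) with hlamdef
  set L1 : ℝ → ℝ := fun s => -((e₂-e₃)*(e₁-e₃)) / ((e₁-e₂)*(s-e₃)^2) with hL1def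
  set L2 : ℝ → ℝ := fun s => 2*((e₂-e₃)*(e₁-e₃)) / ((e₁-e₂)*(s-e₃)^3) with hL2def
  have hIJ : I = fun t => f0 (lam t) := by
    funext t
    rw [hI t]
    unfold f0 PP
    congr 1
    funext w
    rw [one_div_sqrt]
  have he12 : e₁ - e₂ ≠ 0 := by intro h; linarith [sub_eq_zero.mp h]
  have hmem : ∀ s ∈ Ioo e₂ e₁, lam s ∈ Ioo (0:ℝ) 1 := by
    intro s hs
    obtain ⟨hs1, hs2⟩ := hs
    have hnum : 0 < (e₂ - e₃) * (e₁ - s) := by nlinarith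
    have hden : 0 < (e₁ - e₂) * (s - e₃) := by nlinarith
    constructor
    · exact div_pos hnum hden
    · rw [div_lt_one hden]
      nlinarith
  have hs3ne : ∀ s ∈ Ioo e₂ e₁, s - e₃ ≠ 0 := by
    intro s hs h
    have := sub_eq_zero.mp h
    linarith [hs.1]
  have hlam' : ∀ s ∈ Ioo e₂ e₁, HasDerivAt lam (L1 s) s := by
    intro s hs
    have h3 := hs3ne s hs
    have hN : HasDerivAt (fun s : ℝ => (e₂ - e₃) * (e₁ - s)) ((e₂-e₃) * (-1)) s := by
      simpa using ((hasDerivAt_id s).const_sub e₁).const_mul (e₂-e₃)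
    have hD : HasDerivAt (fun s : ℝ => (e₁ - e₂) * (s - e₃)) (e₁-e₂) s := by
      simpa using ((hasDerivAt_id s).sub_const e₃).const_mul (e₁-e₂)
    have hDne : (e₁ - e₂) * (s - e₃) ≠ 0 := mul_ne_zero he12 h3
    have := hN.div hD hDne
    refine this.congr_deriv ?_
    rw [hL1def]
    field_simp
    ring
  have hL1' : ∀ s ∈ Ioo e₂ e₁, HasDerivAt L1 (L2 s) s := by
    intro s hs
    have h3 := hs3ne s hs
    have hpow : HasDerivAt (fun s : ℝ => (e₁-e₂)*(s-e₃)^2) ((e₁-e₂)*(2*(s-e₃))) s := by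
      have h1 : HasDerivAt (fun s : ℝ => (s-e₃)^2) (2*(s-e₃)) s := by
        have := ((hasDerivAt_id s).sub_const e₃).pow 2
        refine this.congr_deriv ?_
        simp
      simpa using h1.const_mul (e₁-e₂)
    have hDne : (e₁ - e₂) * (s - e₃)^2 ≠ 0 := mul_ne_zero he12 (pow_ne_zero 2 h3)
    have := (hasDerivAt_const s (-((e₂-e₃)*(e₁-e₃)))).div hpow hDne
    refine this.congr_deriv ?_
    rw [hL2def]
    field_simp
    ring
  have hDI : ∀ t ∈ Ioo e₂ e₁, HasDerivAt I (f1 (lam t) * L1 t) t := by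
    intro t ht
    rw [hIJ]
    exact (hasDeriv_f0 (hmem t ht)).comp t (hlam' t ht)
  intro s hs
  have hs' := hs
  obtain ⟨hs1, hs2⟩ := hs'
  have hev : deriv I =ᶠ[nhds s] fun t => f1 (lam t) * L1 t := by
    filter_upwards [Ioo_mem_nhds hs1 hs2] with t ht
    exact (hDI t ht).deriv
  have hD2 : HasDerivAt (fun t => f1 (lam t) * L1 t)
      (f2 (lam s) * L1 s * L1 s + f1 (lam s) * L2 s) s :=
    ((hasDeriv_f1 (hmem s hs)).comp s (hlam' s hs)).mul (hL1' s hs)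
  have hd1 : deriv I s = f1 (lam s) * L1 s := (hDI s hs).deriv
  have hd2 : deriv (deriv I) s = f2 (lam s) * L1 s * L1 s + f1 (lam s) * L2 s := by
    rw [hev.deriv_eq]
    exact hD2.deriv
  have hI0 : I s = f0 (lam s) := by rw [hIJ]
  rw [hd1, hd2, hI0]
  set X := lam s with hXdef
  have hODE := f_ode (hmem s hs)
  have hF0 : f0 X = 4*(X*(1-X)*f2 X + (1-2*X)*f1 X) := by linarith
  rw [hF0]
  set C := (e₃ - e₂) * (e₃ - e₁) /
      (4 * (s - e₃) * ((s - e₁) * (s - e₂) * (s - e₃))) with hCdef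
  have h3 := hs3ne s hs
  have h1' : s - e₁ ≠ 0 := by intro h; linarith [sub_eq_zero.mp h]
  have h2' : s - e₂ ≠ 0 := by intro h; linarith [sub_eq_zero.mp h]
  have hα : L1 s * L1 s + C * (4*(X*(1-X))) = 0 := by
    rw [hL1def, hCdef, hXdef, hlamdef]
    field_simp
    ring
  have hβ : L2 s + (1 / (s - e₁) + 1 / (s - e₂)) * L1 s + C * (4*(1-2*X)) = 0 := by
    rw [hL2def, hL1def, hCdef, hXdef, hlamdef]
    field_simp
    ring
  linear_combination f2 X * hα + f1 X * hβ
end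

section
/- Under the hypotheses of the positivity lemma (Q(z) = (z−e₃)z(z−e₁) with e₃ < 0 < e₁, P quadratic with positive residues α₁,α₂,α₃, so w = e₁e₃ < 0 and γ = P(0) < 0, α > 0), for every n ≥ 1 and 2 ≤ i ≤ n+1 the product ψ_{n,i} = α_{n,i}·γ_{n,i} is positive, where α_{n,i} = [(n−i)(n−i+1)+α(n−i+1)]/θ_n − 1 and γ_{n,i} = [w(n−i+1)(n−i+2)+γ(n−i+2)]/θ_n with θ_n = n(n−1+α). -/
theorem psi_ni_positive (w γ α : ℝ) (hw : w < 0) (hγ : γ < 0) (hα : 0 < α)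
    (n i : ℕ) (hn : 1 ≤ n) (hi2 : 2 ≤ i) (hin : i ≤ n + 1) :
    0 < ((((n:ℝ) - i) * ((n:ℝ) - i + 1) + α * ((n:ℝ) - i + 1)) /
          ((n:ℝ) * ((n:ℝ) - 1 + α)) - 1) *
        ((w * ((n:ℝ) - i + 1) * ((n:ℝ) - i + 2) + γ * ((n:ℝ) - i + 2)) /
          ((n:ℝ) * ((n:ℝ) - 1 + α))) := by
  have hn' : (1:ℝ) ≤ (n:ℝ) := by exact_mod_cast hn
  have hi2' : (2:ℝ) ≤ (i:ℝ) := by exact_mod_cast hi2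
  have hin' : (i:ℝ) ≤ (n:ℝ) + 1 := by exact_mod_cast hin
  set x : ℝ := (n:ℝ) - i with hx
  have hx1 : 0 ≤ x + 1 := by simp [hx]; linarith
  have hx2 : x + 1 ≤ (n:ℝ) - 1 := by simp [hx]; linarith
  have hθ : 0 < (n:ℝ) * ((n:ℝ) - 1 + α) := by nlinarith
  have ha : (x * (x + 1) + α * (x + 1)) / ((n:ℝ) * ((n:ℝ) - 1 + α)) - 1 < 0 := by
    rw [sub_neg, div_lt_one hθ]
    nlinarith [mul_nonneg hx1 (le_of_lt hα)]
  have hb : (w * (x + 1) * (x + 2) + γ * (x + 2)) / ((n:ℝ) * ((n:ℝ) - 1 + α)) < 0 := by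
    apply div_neg_of_neg_of_pos _ hθ
    nlinarith [mul_nonneg hx1 (le_of_lt (neg_pos.mpr hw))]
  exact mul_pos_of_neg_of_neg ha hb
end

section
/- Let e₃ < e₂ < e₁, Q(s) = (s−e₁)(s−e₂)(s−e₃), and define ρ(s) = (1/(2π)) ∫_{e₂}^{e₁} dx/√((e₁−x)(x−e₂)(x−e₃)(x−s)) for e₃ < s < e₂ and ρ(s) = (1/(2π)) ∫_{e₃}^{e₂} dx/√((e₁−x)(e₂−x)(x−e₃)(s−x)) for e₂ < s < e₁. Then ∫_{e₃}^{e₁} ρ(s) ds = 1, i.e., ρ is a probability density on (e₃, e₁). -/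
open MeasureTheory Set Real
-- assume b1 contents; re-declare by including file

lemma one_div_sqrt_eq_rpow (x : ℝ) : 1 / Real.sqrt x = x ^ (-(1/2) : ℝ) := by
  rcases lt_trichotomy x 0 with h | rfl | h
  · rw [Real.sqrt_eq_zero_of_nonpos h.le, Real.rpow_def_of_neg h]
    have h2 : (1/2:ℝ)*π = π/2 := by ring
    norm_num [h2, Real.cos_pi_div_two]
  · norm_num
  · rw [Real.rpow_neg h.le, Real.sqrt_eq_rpow, one_div]

lemma II_one_div_sqrt (a b : ℝ) : IntervalIntegrable (fun x : ℝ => 1 / Real.sqrt x) volume a b := by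
  have : (fun x : ℝ => 1 / Real.sqrt x) = fun x : ℝ => x ^ (-(1/2) : ℝ) :=
    funext one_div_sqrt_eq_rpow
  rw [this]
  exact intervalIntegral.intervalIntegrable_rpow' (by norm_num)

lemma II_right (a b c : ℝ) : IntervalIntegrable (fun x : ℝ => 1 / Real.sqrt (x - c)) volume a b := by
  simpa using (II_one_div_sqrt (a - c) (b - c)).comp_sub_right c

lemma II_left (a b c : ℝ) : IntervalIntegrable (fun x : ℝ => 1 / Real.sqrt (c - x)) volume a b := by
  simpa using (II_one_div_sqrt (c - a) (c - b)).comp_sub_left c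

lemma meas_one_div_sqrt {α} [MeasurableSpace α] {P : α → ℝ} (hP : Measurable P) :
    Measurable fun x => 1 / Real.sqrt (P x) := by
  exact measurable_const.div (Real.continuous_sqrt.measurable.comp hP)

lemma integrableOn_of_bound {f g : ℝ → ℝ} {S : Set ℝ} (hS : MeasurableSet S)
    (hf : AEStronglyMeasurable f (volume.restrict S))
    (hg : IntegrableOn g S) (hbound : ∀ x ∈ S, |f x| ≤ g x) :
    IntegrableOn f S := by
  refine hg.mono' hf ?_
  rw [ae_restrict_iff' hS]
  exact ae_of_all _ fun x hx => by simpa [Real.norm_eq_abs] using hbound x hx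

lemma measurable_g (a b : ℝ) : Measurable fun x : ℝ => 1 / Real.sqrt ((b - x) * (x - a)) :=
  meas_one_div_sqrt (by fun_prop)

lemma integrableOn_g {a b : ℝ} (hab : a < b) :
    IntegrableOn (fun x : ℝ => 1 / Real.sqrt ((b - x) * (x - a))) (Ioo a b) := by
  set m := (a + b) / 2 with hm
  have ham : a < m := by rw [hm]; linarith
  have hmb : m < b := by rw [hm]; linarith
  have hsplit : Ioo a b = Ioo a m ∪ Ico m b := by
    rw [Set.Ioo_union_Ico_eq_Ioo ham hmb.le]
  rw [hsplit]
  have hmeas := measurable_g a b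
  refine IntegrableOn.union ?_ ?_
  · refine integrableOn_of_bound measurableSet_Ioo hmeas.aestronglyMeasurable
      ((((II_right a m a).1.mono_set Set.Ioo_subset_Ioc_self).const_mul (1 / Real.sqrt (b - m)))) ?_
    intro x hx
    have h1 : 0 < b - x := by linarith [hx.2]
    have h2 : 0 < x - a := by linarith [hx.1]
    have h3 : (0:ℝ) < b - m := by linarith
    rw [abs_of_nonneg (by positivity)]
    rw [Real.sqrt_mul h1.le]
    rw [div_mul_div_comm, one_mul]
    apply one_div_le_one_div_of_le (by positivity)
    have : Real.sqrt (b - m) ≤ Real.sqrt (b - x) := Real.sqrt_le_sqrt (by linarith [hx.2])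
    exact mul_le_mul_of_nonneg_right this (Real.sqrt_nonneg _)
  · refine integrableOn_of_bound measurableSet_Ico hmeas.aestronglyMeasurable
      ((((intervalIntegrable_iff').mp (II_left m b b)).mono_set
        (by rw [Set.uIcc_of_le hmb.le]; exact Set.Ico_subset_Icc_self)).const_mul
        (1 / Real.sqrt (m - a))) ?_
    intro x hx
    have h1 : 0 < b - x := by linarith [hx.2]
    have h2 : 0 < x - a := by linarith [hx.1]
    have h3 : (0:ℝ) < m - a := by linarith
    rw [abs_of_nonneg (by positivity)]
    rw [Real.sqrt_mul h1.le]
    rw [div_mul_div_comm, one_mul]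
    apply one_div_le_one_div_of_le (by positivity)
    have h5 : Real.sqrt (m - a) ≤ Real.sqrt (x - a) := Real.sqrt_le_sqrt (by linarith [hx.1])
    calc Real.sqrt (m - a) * Real.sqrt (b - x)
        ≤ Real.sqrt (x - a) * Real.sqrt (b - x) :=
          mul_le_mul_of_nonneg_right h5 (Real.sqrt_nonneg _)
      _ = Real.sqrt (b - x) * Real.sqrt (x - a) := mul_comm _ _

lemma intervalIntegrable_g {a b : ℝ} (hab : a < b) :
    IntervalIntegrable (fun x : ℝ => 1 / Real.sqrt ((b - x) * (x - a))) volume a b := by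
  rw [intervalIntegrable_iff_integrableOn_Ioo_of_le hab.le]
  exact integrableOn_g hab

lemma integral_g {a b : ℝ} (hab : a < b) :
    ∫ x in a..b, 1 / Real.sqrt ((b - x) * (x - a)) = π := by
  have hba : (0:ℝ) < b - a := by linarith
  set F : ℝ → ℝ := fun x => Real.arcsin ((2 * x - a - b) / (b - a)) with hF
  have hderiv : ∀ x ∈ Ioo a b, HasDerivAt F (1 / Real.sqrt ((b - x) * (x - a))) x := by
    intro x hx
    have h1 : 0 < b - x := by linarith [hx.2]
    have h2 : 0 < x - a := by linarith [hx.1]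
    set u : ℝ := (2 * x - a - b) / (b - a) with hu
    have hu1 : u ≠ -1 := by
      simp only [hu, ne_eq, div_eq_iff hba.ne']
      intro h; nlinarith
    have hu2 : u ≠ 1 := by
      simp only [hu, ne_eq, div_eq_iff hba.ne']
      intro h; nlinarith
    have hin : HasDerivAt (fun x : ℝ => (2 * x - a - b) / (b - a)) (2 / (b - a)) x := by
      have : HasDerivAt (fun x : ℝ => 2 * x - a - b) 2 x := by
        simpa using (((hasDerivAt_id x).const_mul 2).sub_const a).sub_const b
      simpa [div_eq_mul_inv] using this.mul_const (b - a)⁻¹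
    have harc := (Real.hasDerivAt_arcsin hu1 hu2).comp x hin
    refine harc.congr_deriv ?_
    symm
    set r : ℝ := Real.sqrt ((b - x) * (x - a)) with hr
    have hrpos : 0 < r := Real.sqrt_pos.mpr (by positivity)
    have hr2 : r ^ 2 = (b - x) * (x - a) := Real.sq_sqrt (by positivity)
    have hsq : 1 - u ^ 2 = (2 * r / (b - a)) ^ 2 := by
      rw [hu]; field_simp; nlinarith [hr2]
    rw [hsq, Real.sqrt_sq (by positivity)]
    field_simp
  have hcont : Continuous F := by
    apply Real.continuous_arcsin.comp
    continuity
  have ha : Filter.Tendsto F (nhdsWithin a (Set.Ioi a)) (nhds (-(π/2))) := by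
    have : F a = -(π/2) := by
      rw [hF]; simp only
      have : (2 * a - a - b) / (b - a) = -1 := by field_simp; ring
      rw [this, Real.arcsin_neg_one]
    rw [← this]
    exact (hcont.tendsto a).mono_left nhdsWithin_le_nhds
  have hb : Filter.Tendsto F (nhdsWithin b (Set.Iio b)) (nhds (π/2)) := by
    have : F b = π/2 := by
      rw [hF]; simp only
      have : (2 * b - a - b) / (b - a) = 1 := by field_simp; ring
      rw [this, Real.arcsin_one]
    rw [← this]
    exact (hcont.tendsto b).mono_left nhdsWithin_le_nhds
  rw [intervalIntegral.integral_eq_sub_of_hasDerivAt_of_tendsto hab hderiv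
    (intervalIntegrable_g hab) ha hb]
  ring

lemma integral_one_div_sqrt_left {a b c : ℝ} (hab : a ≤ b) (hbc : b < c) :
    ∫ s in a..b, 1 / Real.sqrt (c - s) = 2 * Real.sqrt (c - a) - 2 * Real.sqrt (c - b) := by
  have hderiv : ∀ s ∈ Set.uIcc a b, HasDerivAt (fun s : ℝ => -2 * Real.sqrt (c - s))
      (1 / Real.sqrt (c - s)) s := by
    intro s hs
    rw [Set.uIcc_of_le hab] at hs
    have hcs : 0 < c - s := by linarith [hs.2]
    have h1 : HasDerivAt (fun s : ℝ => c - s) (-1) s := by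
      simpa using (hasDerivAt_id s).const_sub c
    have h2 := (Real.hasDerivAt_sqrt hcs.ne').comp s h1
    have h3 := h2.const_mul (-2 : ℝ)
    refine h3.congr_deriv ?_
    symm
    have : Real.sqrt (c - s) ≠ 0 := by positivity
    field_simp
  have hint : IntervalIntegrable (fun s : ℝ => 1 / Real.sqrt (c - s)) volume a b :=
    II_left a b c
  rw [intervalIntegral.integral_eq_sub_of_hasDerivAt hderiv hint]
  ring

lemma integral_one_div_sqrt_right {a b c : ℝ} (hab : a ≤ b) (hca : c < a) :
    ∫ s in a..b, 1 / Real.sqrt (s - c) = 2 * Real.sqrt (b - c) - 2 * Real.sqrt (a - c) := by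
  have hderiv : ∀ s ∈ Set.uIcc a b, HasDerivAt (fun s : ℝ => 2 * Real.sqrt (s - c))
      (1 / Real.sqrt (s - c)) s := by
    intro s hs
    rw [Set.uIcc_of_le hab] at hs
    have hcs : 0 < s - c := by linarith [hs.1]
    have h1 : HasDerivAt (fun s : ℝ => s - c) 1 s := by
      simpa using (hasDerivAt_id s).sub_const c
    have h2 := (Real.hasDerivAt_sqrt hcs.ne').comp s h1
    have h3 := h2.const_mul (2 : ℝ)
    refine h3.congr_deriv ?_
    symm
    have : Real.sqrt (s - c) ≠ 0 := by positivity
    field_simp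
  rw [intervalIntegral.integral_eq_sub_of_hasDerivAt hderiv (II_right a b c)]

lemma sqrt_aux {p q r : ℝ} (hp : 0 < p) (hq : 0 < q) (hr : 0 < r) :
    (2 * Real.sqrt r - 2 * Real.sqrt q) * (1 / Real.sqrt (p * q * r)) =
      2 * (1 / Real.sqrt (p * q)) - 2 * (1 / Real.sqrt (p * r)) := by
  rw [Real.sqrt_mul (by positivity : (0:ℝ) ≤ p * q), Real.sqrt_mul hp.le,
    Real.sqrt_mul hp.le]
  have hsp : 0 < Real.sqrt p := Real.sqrt_pos.mpr hp
  have hsq : 0 < Real.sqrt q := Real.sqrt_pos.mpr hq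
  have hsr : 0 < Real.sqrt r := Real.sqrt_pos.mpr hr
  field_simp

section Region1

variable {e₁ e₂ e₃ : ℝ} (h32 : e₃ < e₂) (h21 : e₂ < e₁)

lemma meas_f₁ : Measurable (Function.uncurry fun s x : ℝ =>
    1 / Real.sqrt ((e₁ - x) * (x - e₂) * (x - e₃) * (x - s))) :=
  meas_one_div_sqrt (by fun_prop)

include h32 h21 in
lemma slice_f₁ {s : ℝ} (hs : s ∈ Ioo e₃ e₂) :
    IntegrableOn (fun x : ℝ => 1 / Real.sqrt ((e₁ - x) * (x - e₂) * (x - e₃) * (x - s)))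
      (Ioo e₂ e₁) := by
  have hCpos : (0:ℝ) < (e₂ - e₃) * (e₂ - s) :=
    mul_pos (by linarith) (by linarith [hs.2])
  refine integrableOn_of_bound measurableSet_Ioo
    ((meas_one_div_sqrt (by fun_prop)).aestronglyMeasurable)
    ((integrableOn_g h21).mul_const (1 / Real.sqrt ((e₂ - e₃) * (e₂ - s)))) ?_
  intro x hx
  have h1 : 0 < e₁ - x := by linarith [hx.2]
  have h2 : 0 < x - e₂ := by linarith [hx.1]
  have h3 : 0 < x - e₃ := by linarith [hx.1]
  have h4 : 0 < x - s := by linarith [hx.1, hs.2]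
  rw [abs_of_nonneg (by positivity)]
  have hre : (e₁ - x) * (x - e₂) * (x - e₃) * (x - s)
      = ((e₁ - x) * (x - e₂)) * ((x - e₃) * (x - s)) := by ring
  rw [hre, Real.sqrt_mul (by positivity), div_mul_div_comm, one_mul]
  apply one_div_le_one_div_of_le
    (mul_pos (Real.sqrt_pos.mpr (mul_pos h1 h2)) (Real.sqrt_pos.mpr hCpos))
  apply mul_le_mul_of_nonneg_left _ (Real.sqrt_nonneg _)
  apply Real.sqrt_le_sqrt
  have hs2 : e₂ - s ≤ x - s := by linarith [hx.1]
  have hs3 : e₂ - e₃ ≤ x - e₃ := by linarith [hx.1]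
  nlinarith

include h32 h21 in
lemma prod_f₁ : Integrable (Function.uncurry fun s x : ℝ =>
      1 / Real.sqrt ((e₁ - x) * (x - e₂) * (x - e₃) * (x - s)))
    ((volume.restrict (Ioo e₃ e₂)).prod (volume.restrict (Ioo e₂ e₁))) := by
  set f : ℝ → ℝ → ℝ := fun s x => 1 / Real.sqrt ((e₁ - x) * (x - e₂) * (x - e₃) * (x - s))
    with hf
  have hmeas : Measurable (Function.uncurry f) := meas_f₁
  rw [MeasureTheory.integrable_prod_iff hmeas.aestronglyMeasurable]
  constructor
  · rw [ae_restrict_iff' measurableSet_Ioo]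
    exact ae_of_all _ fun s hs => slice_f₁ h32 h21 hs
  · set B : ℝ := ∫ x in Ioo e₂ e₁, 1 / Real.sqrt ((e₁ - x) * (x - e₂)) with hB
    have hBnn : 0 ≤ B := setIntegral_nonneg measurableSet_Ioo fun x _ => by positivity
    refine integrableOn_of_bound measurableSet_Ioo ?_
      (((II_left e₃ e₂ e₂).1.mono_set Set.Ioo_subset_Ioc_self).const_mul
        (B * (1 / Real.sqrt (e₂ - e₃)))) ?_
    · exact (hmeas.norm.aestronglyMeasurable.integral_prod_right')
    · intro s hs
      have hs1 := hs.1; have hs2 := hs.2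
      have hC : (0:ℝ) < e₂ - s := by linarith
      have key : ∫ x in Ioo e₂ e₁, ‖f s x‖ ≤
          B * (1 / Real.sqrt ((e₂ - e₃) * (e₂ - s))) := by
        have hint1 : IntegrableOn (fun x => ‖f s x‖) (Ioo e₂ e₁) :=
          (slice_f₁ h32 h21 hs).norm
        have hint2 : IntegrableOn (fun x =>
            (1 / Real.sqrt ((e₁ - x) * (x - e₂))) * (1 / Real.sqrt ((e₂ - e₃) * (e₂ - s))))
            (Ioo e₂ e₁) := (integrableOn_g h21).mul_const _
        have hmono := setIntegral_mono_on hint1 hint2 measurableSet_Ioo ?_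
        · rw [integral_mul_const] at hmono
          exact hmono.trans_eq rfl
        · intro x hx
          have h1 : 0 < e₁ - x := by linarith [hx.2]
          have h2 : 0 < x - e₂ := by linarith [hx.1]
          have h3 : 0 < x - e₃ := by linarith [hx.1]
          have h4 : 0 < x - s := by linarith [hx.1]
          rw [hf]
          simp only [Real.norm_eq_abs]
          rw [abs_of_nonneg (by positivity)]
          have hre : (e₁ - x) * (x - e₂) * (x - e₃) * (x - s)
              = ((e₁ - x) * (x - e₂)) * ((x - e₃) * (x - s)) := by ring
          rw [hre, Real.sqrt_mul (by positivity), div_mul_div_comm, one_mul]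
          apply one_div_le_one_div_of_le
            (mul_pos (Real.sqrt_pos.mpr (mul_pos h1 h2))
              (Real.sqrt_pos.mpr (mul_pos (by linarith : (0:ℝ) < e₂ - e₃) hC)))
          apply mul_le_mul_of_nonneg_left _ (Real.sqrt_nonneg _)
          apply Real.sqrt_le_sqrt
          nlinarith
      have keq : B * (1 / Real.sqrt ((e₂ - e₃) * (e₂ - s)))
          = (B * (1 / Real.sqrt (e₂ - e₃))) * (1 / Real.sqrt (e₂ - s)) := by
        rw [Real.sqrt_mul (by linarith : (0:ℝ) ≤ e₂ - e₃), mul_assoc,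
          div_mul_div_comm, one_mul]
      calc |∫ x in Ioo e₂ e₁, ‖f s x‖| = ∫ x in Ioo e₂ e₁, ‖f s x‖ := by
            rw [abs_of_nonneg]
            exact setIntegral_nonneg measurableSet_Ioo fun x _ => norm_nonneg _
        _ ≤ B * (1 / Real.sqrt ((e₂ - e₃) * (e₂ - s))) := key
        _ = _ := keq

end Region1

section Region1v

variable {e₁ e₂ e₃ : ℝ} (h32 : e₃ < e₂) (h21 : e₂ < e₁)

include h32 h21 in
lemma integrableOn_G₁ :
    IntegrableOn (fun x : ℝ => 1 / Real.sqrt ((e₁ - x) * (x - e₃))) (Ioo e₂ e₁) := by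
  refine integrableOn_of_bound measurableSet_Ioo
    ((meas_one_div_sqrt (by fun_prop)).aestronglyMeasurable) (integrableOn_g h21) ?_
  intro x hx
  have h1 : 0 < e₁ - x := by linarith [hx.2]
  have h2 : 0 < x - e₂ := by linarith [hx.1]
  have h3 : 0 < x - e₃ := by linarith [hx.1]
  rw [abs_of_nonneg (by positivity)]
  apply one_div_le_one_div_of_le (Real.sqrt_pos.mpr (mul_pos h1 h2))
  apply Real.sqrt_le_sqrt
  nlinarith

include h32 h21 in
lemma value_I₁ : ∫ s in Ioo e₃ e₂, ∫ x in Ioo e₂ e₁,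
      1 / Real.sqrt ((e₁ - x) * (x - e₂) * (x - e₃) * (x - s))
    = 2 * π - 2 * ∫ x in Ioo e₂ e₁, 1 / Real.sqrt ((e₁ - x) * (x - e₃)) := by
  rw [MeasureTheory.integral_integral_swap (prod_f₁ h32 h21)]
  have hinner : ∀ x ∈ Ioo e₂ e₁, (∫ s in Ioo e₃ e₂,
      1 / Real.sqrt ((e₁ - x) * (x - e₂) * (x - e₃) * (x - s)))
      = 2 * (1 / Real.sqrt ((e₁ - x) * (x - e₂))) - 2 * (1 / Real.sqrt ((e₁ - x) * (x - e₃))) := by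
    intro x hx
    have h1 : 0 < e₁ - x := by linarith [hx.2]
    have h2 : 0 < x - e₂ := by linarith [hx.1]
    have h3 : 0 < x - e₃ := by linarith [hx.1]
    have step1 : ∀ s ∈ Ioo e₃ e₂,
        1 / Real.sqrt ((e₁ - x) * (x - e₂) * (x - e₃) * (x - s))
        = (1 / Real.sqrt (x - s)) * (1 / Real.sqrt ((e₁ - x) * (x - e₂) * (x - e₃))) := by
      intro s hs
      rw [Real.sqrt_mul (by positivity), div_mul_div_comm, one_mul, mul_comm]
    rw [setIntegral_congr_fun measurableSet_Ioo step1, integral_mul_const,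
      ← integral_Ioc_eq_integral_Ioo, ← intervalIntegral.integral_of_le h32.le,
      integral_one_div_sqrt_left h32.le (by linarith [hx.1] : e₂ < x)]
    exact sqrt_aux h1 h2 h3
  rw [setIntegral_congr_fun measurableSet_Ioo hinner]
  rw [MeasureTheory.integral_sub ((integrableOn_g h21).const_mul 2)
    ((integrableOn_G₁ h32 h21).const_mul 2),
    integral_const_mul, integral_const_mul]
  have : ∫ x in Ioo e₂ e₁, 1 / Real.sqrt ((e₁ - x) * (x - e₂)) = π := by
    rw [← integral_Ioc_eq_integral_Ioo, ← intervalIntegral.integral_of_le h21.le,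
      integral_g h21]
  rw [this]

end Region1v

section Region2

variable {e₁ e₂ e₃ : ℝ} (h32 : e₃ < e₂) (h21 : e₂ < e₁)

include h32 h21 in
lemma slice_f₂ {s : ℝ} (hs : s ∈ Ioo e₂ e₁) :
    IntegrableOn (fun x : ℝ => 1 / Real.sqrt ((e₁ - x) * (e₂ - x) * (x - e₃) * (s - x)))
      (Ioo e₃ e₂) := by
  have hCpos : (0:ℝ) < (e₁ - e₂) * (s - e₂) :=
    mul_pos (by linarith) (by linarith [hs.1])
  refine integrableOn_of_bound measurableSet_Ioo
    ((meas_one_div_sqrt (by fun_prop)).aestronglyMeasurable)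
    ((integrableOn_g h32).mul_const (1 / Real.sqrt ((e₁ - e₂) * (s - e₂)))) ?_
  intro x hx
  have h1 : 0 < e₁ - x := by linarith [hx.2]
  have h2 : 0 < e₂ - x := by linarith [hx.2]
  have h3 : 0 < x - e₃ := by linarith [hx.1]
  have h4 : 0 < s - x := by linarith [hx.2, hs.1]
  rw [abs_of_nonneg (by positivity)]
  have hre : (e₁ - x) * (e₂ - x) * (x - e₃) * (s - x)
      = ((e₂ - x) * (x - e₃)) * ((e₁ - x) * (s - x)) := by ring
  rw [hre, Real.sqrt_mul (by positivity), div_mul_div_comm, one_mul]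
  apply one_div_le_one_div_of_le
    (mul_pos (Real.sqrt_pos.mpr (mul_pos h2 h3)) (Real.sqrt_pos.mpr hCpos))
  apply mul_le_mul_of_nonneg_left _ (Real.sqrt_nonneg _)
  apply Real.sqrt_le_sqrt
  have hs2 : s - e₂ ≤ s - x := by linarith [hx.2]
  have hs3 : e₁ - e₂ ≤ e₁ - x := by linarith [hx.2]
  nlinarith

include h32 h21 in
lemma prod_f₂ : Integrable (Function.uncurry fun s x : ℝ =>
      1 / Real.sqrt ((e₁ - x) * (e₂ - x) * (x - e₃) * (s - x)))
    ((volume.restrict (Ioo e₂ e₁)).prod (volume.restrict (Ioo e₃ e₂))) := by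
  set f : ℝ → ℝ → ℝ := fun s x => 1 / Real.sqrt ((e₁ - x) * (e₂ - x) * (x - e₃) * (s - x))
    with hf
  have hmeas : Measurable (Function.uncurry f) := meas_one_div_sqrt (by fun_prop)
  rw [MeasureTheory.integrable_prod_iff hmeas.aestronglyMeasurable]
  constructor
  · rw [ae_restrict_iff' measurableSet_Ioo]
    exact ae_of_all _ fun s hs => slice_f₂ h32 h21 hs
  · set B : ℝ := ∫ x in Ioo e₃ e₂, 1 / Real.sqrt ((e₂ - x) * (x - e₃)) with hB
    refine integrableOn_of_bound measurableSet_Ioo ?_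
      (((II_right e₂ e₁ e₂).1.mono_set Set.Ioo_subset_Ioc_self).const_mul
        (B * (1 / Real.sqrt (e₁ - e₂)))) ?_
    · exact (hmeas.norm.aestronglyMeasurable.integral_prod_right')
    · intro s hs
      have hs1 := hs.1; have hs2 := hs.2
      have hC : (0:ℝ) < s - e₂ := by linarith
      have key : ∫ x in Ioo e₃ e₂, ‖f s x‖ ≤
          B * (1 / Real.sqrt ((e₁ - e₂) * (s - e₂))) := by
        have hint1 : IntegrableOn (fun x => ‖f s x‖) (Ioo e₃ e₂) :=
          (slice_f₂ h32 h21 hs).norm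
        have hint2 : IntegrableOn (fun x =>
            (1 / Real.sqrt ((e₂ - x) * (x - e₃))) * (1 / Real.sqrt ((e₁ - e₂) * (s - e₂))))
            (Ioo e₃ e₂) := (integrableOn_g h32).mul_const _
        have hmono := setIntegral_mono_on hint1 hint2 measurableSet_Ioo ?_
        · rw [integral_mul_const] at hmono
          exact hmono.trans_eq rfl
        · intro x hx
          have h1 : 0 < e₁ - x := by linarith [hx.2]
          have h2 : 0 < e₂ - x := by linarith [hx.2]
          have h3 : 0 < x - e₃ := by linarith [hx.1]
          have h4 : 0 < s - x := by linarith [hx.2]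
          rw [hf]
          simp only [Real.norm_eq_abs]
          rw [abs_of_nonneg (by positivity)]
          have hre : (e₁ - x) * (e₂ - x) * (x - e₃) * (s - x)
              = ((e₂ - x) * (x - e₃)) * ((e₁ - x) * (s - x)) := by ring
          rw [hre, Real.sqrt_mul (by positivity), div_mul_div_comm, one_mul]
          apply one_div_le_one_div_of_le
            (mul_pos (Real.sqrt_pos.mpr (mul_pos h2 h3))
              (Real.sqrt_pos.mpr (mul_pos (by linarith : (0:ℝ) < e₁ - e₂) hC)))
          apply mul_le_mul_of_nonneg_left _ (Real.sqrt_nonneg _)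
          apply Real.sqrt_le_sqrt
          nlinarith
      have keq : B * (1 / Real.sqrt ((e₁ - e₂) * (s - e₂)))
          = (B * (1 / Real.sqrt (e₁ - e₂))) * (1 / Real.sqrt (s - e₂)) := by
        rw [Real.sqrt_mul (by linarith : (0:ℝ) ≤ e₁ - e₂), mul_assoc,
          div_mul_div_comm, one_mul]
      calc |∫ x in Ioo e₃ e₂, ‖f s x‖| = ∫ x in Ioo e₃ e₂, ‖f s x‖ := by
            rw [abs_of_nonneg]
            exact setIntegral_nonneg measurableSet_Ioo fun x _ => norm_nonneg _
        _ ≤ B * (1 / Real.sqrt ((e₁ - e₂) * (s - e₂))) := key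
        _ = _ := keq

include h32 h21 in
lemma integrableOn_G₂ :
    IntegrableOn (fun x : ℝ => 1 / Real.sqrt ((e₁ - x) * (x - e₃))) (Ioo e₃ e₂) := by
  refine integrableOn_of_bound measurableSet_Ioo
    ((meas_one_div_sqrt (by fun_prop)).aestronglyMeasurable) (integrableOn_g h32) ?_
  intro x hx
  have h1 : 0 < e₁ - x := by linarith [hx.2]
  have h2 : 0 < e₂ - x := by linarith [hx.2]
  have h3 : 0 < x - e₃ := by linarith [hx.1]
  rw [abs_of_nonneg (by positivity)]
  apply one_div_le_one_div_of_le (Real.sqrt_pos.mpr (mul_pos h2 h3))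
  apply Real.sqrt_le_sqrt
  nlinarith

include h32 h21 in
lemma value_I₂ : ∫ s in Ioo e₂ e₁, ∫ x in Ioo e₃ e₂,
      1 / Real.sqrt ((e₁ - x) * (e₂ - x) * (x - e₃) * (s - x))
    = 2 * π - 2 * ∫ x in Ioo e₃ e₂, 1 / Real.sqrt ((e₁ - x) * (x - e₃)) := by
  rw [MeasureTheory.integral_integral_swap (prod_f₂ h32 h21)]
  have hinner : ∀ x ∈ Ioo e₃ e₂, (∫ s in Ioo e₂ e₁,
      1 / Real.sqrt ((e₁ - x) * (e₂ - x) * (x - e₃) * (s - x)))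
      = 2 * (1 / Real.sqrt ((e₂ - x) * (x - e₃))) - 2 * (1 / Real.sqrt ((e₁ - x) * (x - e₃))) := by
    intro x hx
    have h1 : 0 < e₁ - x := by linarith [hx.2]
    have h2 : 0 < e₂ - x := by linarith [hx.2]
    have h3 : 0 < x - e₃ := by linarith [hx.1]
    have step1 : ∀ s ∈ Ioo e₂ e₁,
        1 / Real.sqrt ((e₁ - x) * (e₂ - x) * (x - e₃) * (s - x))
        = (1 / Real.sqrt (s - x)) * (1 / Real.sqrt ((e₁ - x) * (e₂ - x) * (x - e₃))) := by
      intro s hs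
      rw [Real.sqrt_mul (by positivity), div_mul_div_comm, one_mul, mul_comm]
    rw [setIntegral_congr_fun measurableSet_Ioo step1, integral_mul_const,
      ← integral_Ioc_eq_integral_Ioo, ← intervalIntegral.integral_of_le h21.le,
      integral_one_div_sqrt_right h21.le (by linarith [hx.2] : x < e₂)]
    have hre : (e₁ - x) * (e₂ - x) * (x - e₃) = (x - e₃) * (e₂ - x) * (e₁ - x) := by ring
    have hre2 : (x - e₃) * (e₂ - x) = (e₂ - x) * (x - e₃) := by ring
    have hre3 : (x - e₃) * (e₁ - x) = (e₁ - x) * (x - e₃) := by ring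
    rw [hre]
    rw [sqrt_aux h3 h2 h1, hre2, hre3]
  rw [setIntegral_congr_fun measurableSet_Ioo hinner]
  rw [MeasureTheory.integral_sub ((integrableOn_g h32).const_mul 2)
    ((integrableOn_G₂ h32 h21).const_mul 2),
    integral_const_mul, integral_const_mul]
  have : ∫ x in Ioo e₃ e₂, 1 / Real.sqrt ((e₂ - x) * (x - e₃)) = π := by
    rw [← integral_Ioc_eq_integral_Ioo, ← intervalIntegral.integral_of_le h32.le,
      integral_g h32]
  rw [this]

end Region2

lemma J_sum {e₁ e₂ e₃ : ℝ} (h32 : e₃ < e₂) (h21 : e₂ < e₁) :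
    (∫ x in Ioo e₂ e₁, 1 / Real.sqrt ((e₁ - x) * (x - e₃)))
      + ∫ x in Ioo e₃ e₂, 1 / Real.sqrt ((e₁ - x) * (x - e₃)) = π := by
  have h31 : e₃ < e₁ := h32.trans h21
  have hsub1 : Set.uIcc e₃ e₂ ⊆ Set.uIcc e₃ e₁ := by
    rw [Set.uIcc_of_le h32.le, Set.uIcc_of_le h31.le]
    exact Set.Icc_subset_Icc le_rfl h21.le
  have hsub2 : Set.uIcc e₂ e₁ ⊆ Set.uIcc e₃ e₁ := by
    rw [Set.uIcc_of_le h21.le, Set.uIcc_of_le h31.le]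
    exact Set.Icc_subset_Icc h32.le le_rfl
  have hi1 := (intervalIntegrable_g h31).mono_set hsub1
  have hi2 := (intervalIntegrable_g h31).mono_set hsub2
  have hadd := intervalIntegral.integral_add_adjacent_intervals hi1 hi2
  rw [integral_g h31] at hadd
  rw [← integral_Ioc_eq_integral_Ioo, ← intervalIntegral.integral_of_le h21.le,
    ← integral_Ioc_eq_integral_Ioo, ← intervalIntegral.integral_of_le h32.le]
  linarith

theorem density_is_probability (e₁ e₂ e₃ : ℝ)
    (h32 : e₃ < e₂) (h21 : e₂ < e₁) (ρ : ℝ → ℝ)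
    (hρ₁ : ∀ s ∈ Set.Ioo e₃ e₂, ρ s = (1 / (2 * Real.pi)) *
      ∫ x in e₂..e₁, 1 / Real.sqrt ((e₁ - x) * (x - e₂) * (x - e₃) * (x - s)))
    (hρ₂ : ∀ s ∈ Set.Ioo e₂ e₁, ρ s = (1 / (2 * Real.pi)) *
      ∫ x in e₃..e₂, 1 / Real.sqrt ((e₁ - x) * (e₂ - x) * (x - e₃) * (s - x))) :
    ∫ s in e₃..e₁, ρ s = 1 := by
  have h31 : e₃ < e₁ := h32.trans h21
  have hπ : (0:ℝ) < π := Real.pi_pos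
  -- formulas as set integrals over Ioo
  set F₁ : ℝ → ℝ := fun s => (1 / (2 * π)) *
    ∫ x in Ioo e₂ e₁, 1 / Real.sqrt ((e₁ - x) * (x - e₂) * (x - e₃) * (x - s)) with hF₁
  set F₂ : ℝ → ℝ := fun s => (1 / (2 * π)) *
    ∫ x in Ioo e₃ e₂, 1 / Real.sqrt ((e₁ - x) * (e₂ - x) * (x - e₃) * (s - x)) with hF₂
  have hEq₁ : Set.EqOn ρ F₁ (Ioo e₃ e₂) := by
    intro s hs
    rw [hρ₁ s hs, hF₁]
    simp only
    rw [intervalIntegral.integral_of_le h21.le, integral_Ioc_eq_integral_Ioo]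
  have hEq₂ : Set.EqOn ρ F₂ (Ioo e₂ e₁) := by
    intro s hs
    rw [hρ₂ s hs, hF₂]
    simp only
    rw [intervalIntegral.integral_of_le h32.le, integral_Ioc_eq_integral_Ioo]
  have hIF₁ : IntegrableOn F₁ (Ioo e₃ e₂) := by
    have h := ((prod_f₁ h32 h21).integral_prod_left).const_mul (1 / (2 * π))
    exact h
  have hIF₂ : IntegrableOn F₂ (Ioo e₂ e₁) := by
    have h := ((prod_f₂ h32 h21).integral_prod_left).const_mul (1 / (2 * π))
    exact h
  have hint1 : IntervalIntegrable ρ volume e₃ e₂ := by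
    rw [intervalIntegrable_iff_integrableOn_Ioo_of_le h32.le]
    exact hIF₁.congr_fun (fun s hs => (hEq₁ hs).symm) measurableSet_Ioo
  have hint2 : IntervalIntegrable ρ volume e₂ e₁ := by
    rw [intervalIntegrable_iff_integrableOn_Ioo_of_le h21.le]
    exact hIF₂.congr_fun (fun s hs => (hEq₂ hs).symm) measurableSet_Ioo
  rw [← intervalIntegral.integral_add_adjacent_intervals hint1 hint2]
  have hv₁ : ∫ s in e₃..e₂, ρ s = (1 / (2 * π)) *
      (2 * π - 2 * ∫ x in Ioo e₂ e₁, 1 / Real.sqrt ((e₁ - x) * (x - e₃))) := by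
    rw [intervalIntegral.integral_of_le h32.le, integral_Ioc_eq_integral_Ioo,
      setIntegral_congr_fun measurableSet_Ioo hEq₁, hF₁]
    simp only
    rw [integral_const_mul, value_I₁ h32 h21]
  have hv₂ : ∫ s in e₂..e₁, ρ s = (1 / (2 * π)) *
      (2 * π - 2 * ∫ x in Ioo e₃ e₂, 1 / Real.sqrt ((e₁ - x) * (x - e₃))) := by
    rw [intervalIntegral.integral_of_le h21.le, integral_Ioc_eq_integral_Ioo,
      setIntegral_congr_fun measurableSet_Ioo hEq₂, hF₂]
    simp only
    rw [integral_const_mul, value_I₂ h32 h21]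
  rw [hv₁, hv₂]
  have hJ := J_sum h32 h21
  field_simp
  linarith
end
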